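/- arXiv:1207.5979 — 10 statements merged into one kernel-verified Lean document; each statement's English description precedes it below -/
import Mathlib

section
/- Let n ≥ 2 and let U ⊆ ℝⁿ be an open set all of whose points have pairwise distinct coordinates u¹,…,uⁿ. Let β_ij (i ≠ j) be smooth functions on U satisfying (ED1) ∂_k β_ij = β_ik β_kj for pairwise distinct i,j,k, and (ED2) e(β_ij) = 0. Let H₁,…,H_n be smooth nowhere-vanishing functions on U satisfying (L1) ∂_j H_i = β_ij H_j for i ≠ j, and (L2) e(H_i) = 0. Define Christoffel symbols Γ^i_{jk} on U by: Γ^i_{jk} = 0 for pairwise distinct i,j,k; Γ^i_{ij} = (H_j/H_i) β_ij for i ≠ j; Γ^i_{jj} = −Γ^i_{ij} for i ≠ j; Γ^i_{ii} = −Σ_{l≠i} Γ^i_{li}. Then the curvature tensor R^i_{jkl} := ∂_k Γ^i_{lj} − ∂_l Γ^i_{kj} + Σ_m (Γ^i_{km} Γ^m_{lj} − Γ^i_{lm} Γ^m_{kj}) vanishes identically on U. -/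
/-- Partial derivative `∂_i f` of a function `f : ℝⁿ → ℝ` at `x`. -/
noncomputable def pd {n : ℕ} (i : Fin n) (f : (Fin n → ℝ) → ℝ) (x : Fin n → ℝ) : ℝ :=
  fderiv ℝ f x (Pi.single i 1)

/-- Christoffel symbols `Γ^i_{jk}` of the natural connection built from rotation
coefficients `β` and Lamé coefficients `H`. -/
noncomputable def Gamma {n : ℕ} (β : Fin n → Fin n → (Fin n → ℝ) → ℝ)
    (H : Fin n → (Fin n → ℝ) → ℝ) (i j k : Fin n) (x : Fin n → ℝ) : ℝ :=
  if i = j then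
    if j = k then -(∑ l ∈ Finset.univ.erase i, (H l x / H i x) * β i l x)
    else (H k x / H i x) * β i k x
  else if i = k then (H j x / H i x) * β i j x
  else if j = k then -((H j x / H i x) * β i j x)
  else 0

/-- `γ_{ij} = (H_j/H_i) β_{ij}`. -/
noncomputable def gam {n : ℕ} (β : Fin n → Fin n → (Fin n → ℝ) → ℝ)
    (H : Fin n → (Fin n → ℝ) → ℝ) (i j : Fin n) (x : Fin n → ℝ) : ℝ :=
  H j x / H i x * β i j x

lemma pd_const {n : ℕ} (k : Fin n) (c : ℝ) (x : Fin n → ℝ) : pd k (fun _ => c) x = 0 := by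
  simp [pd]

lemma pd_neg {n : ℕ} (k : Fin n) (f : (Fin n → ℝ) → ℝ) (x : Fin n → ℝ) :
    pd k (fun y => -(f y)) x = -pd k f x := by
  simp only [pd, fderiv_fun_neg, ContinuousLinearMap.neg_apply]

lemma pd_mul {n : ℕ} (k : Fin n) {f g : (Fin n → ℝ) → ℝ} {x : Fin n → ℝ}
    (hf : DifferentiableAt ℝ f x) (hg : DifferentiableAt ℝ g x) :
    pd k (fun y => f y * g y) x = pd k f x * g x + f x * pd k g x := by
  simp only [pd, fderiv_fun_mul hf hg, ContinuousLinearMap.add_apply,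
    ContinuousLinearMap.smul_apply, smul_eq_mul]
  ring

lemma pd_sum {n : ℕ} {ι : Type*} (s : Finset ι) (k : Fin n) {f : ι → (Fin n → ℝ) → ℝ}
    {x : Fin n → ℝ} (h : ∀ i ∈ s, DifferentiableAt ℝ (f i) x) :
    pd k (fun y => ∑ i ∈ s, f i y) x = ∑ i ∈ s, pd k (f i) x := by
  simp only [pd, fderiv_fun_sum h, ContinuousLinearMap.sum_apply]

lemma sum_split2 {n : ℕ} (f : Fin n → ℝ) (a b : Fin n) (hab : a ≠ b) :
    ∑ m, f m = f a + (f b + ∑ m ∈ (Finset.univ.erase a).erase b, f m) := by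
  rw [← Finset.add_sum_erase _ f (Finset.mem_univ a),
    ← Finset.add_sum_erase _ f (Finset.mem_erase.2 ⟨hab.symm, Finset.mem_univ b⟩)]

lemma sum_split3 {n : ℕ} (f : Fin n → ℝ) (a b c : Fin n) (hab : a ≠ b) (hac : a ≠ c)
    (hbc : b ≠ c) :
    ∑ m, f m = f a + (f b + (f c + ∑ m ∈ ((Finset.univ.erase a).erase b).erase c, f m)) := by
  rw [← Finset.add_sum_erase _ f (Finset.mem_univ a),
    ← Finset.add_sum_erase _ f (Finset.mem_erase.2 ⟨hab.symm, Finset.mem_univ b⟩),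
    ← Finset.add_sum_erase _ f (Finset.mem_erase.2 ⟨hbc.symm,
      Finset.mem_erase.2 ⟨hac.symm, Finset.mem_univ c⟩⟩)]

theorem natural_connection_is_flat {n : ℕ} (hn : 2 ≤ n)
    (U : Set (Fin n → ℝ)) (hU : IsOpen U)
    (hdist : ∀ x ∈ U, ∀ i j : Fin n, i ≠ j → x i ≠ x j)
    (β : Fin n → Fin n → (Fin n → ℝ) → ℝ)
    (hβ : ∀ i j : Fin n, i ≠ j → ContDiffOn ℝ (⊤ : ℕ∞) (β i j) U)
    (hED1 : ∀ i j k : Fin n, i ≠ j → j ≠ k → i ≠ k →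
      ∀ x ∈ U, pd k (β i j) x = β i k x * β k j x)
    (hED2 : ∀ i j : Fin n, i ≠ j → ∀ x ∈ U, ∑ l, pd l (β i j) x = 0)
    (H : Fin n → (Fin n → ℝ) → ℝ)
    (hH : ∀ i, ContDiffOn ℝ (⊤ : ℕ∞) (H i) U)
    (hH0 : ∀ i, ∀ x ∈ U, H i x ≠ 0)
    (hL1 : ∀ i j : Fin n, i ≠ j → ∀ x ∈ U, pd j (H i) x = β i j x * H j x)
    (hL2 : ∀ i, ∀ x ∈ U, ∑ l, pd l (H i) x = 0) :
    ∀ x ∈ U, ∀ i j k l : Fin n,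
      pd k (Gamma β H i l j) x - pd l (Gamma β H i k j) x
        + ∑ m, (Gamma β H i k m x * Gamma β H m l j x
            - Gamma β H i l m x * Gamma β H m k j x) = 0 := by
  intro x hx i j k l
  have hmem : U ∈ nhds x := hU.mem_nhds hx
  have hdβ : ∀ a b : Fin n, a ≠ b → DifferentiableAt ℝ (β a b) x := fun a b hab =>
    ((hβ a b hab).differentiableOn (by simp)).differentiableAt hmem
  have hdH : ∀ a : Fin n, DifferentiableAt ℝ (H a) x := fun a =>
    ((hH a).differentiableOn (by simp)).differentiableAt hmem
  have hdγ : ∀ a b : Fin n, a ≠ b → DifferentiableAt ℝ (gam β H a b) x := by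
    intro a b hab
    have : gam β H a b = fun y => H b y * (H a y)⁻¹ * β a b y :=
      funext fun y => by rw [gam, div_eq_mul_inv]
    rw [this]
    exact ((hdH b).mul ((hdH a).inv (hH0 a x hx))).mul (hdβ a b hab)
  -- pointwise values of Gamma
  have hv0 : ∀ a b c : Fin n, a ≠ b → a ≠ c → b ≠ c → ∀ y, Gamma β H a b c y = 0 := by
    intro a b c hab hac hbc y; simp [Gamma, hab, hac, hbc]
  have hv1 : ∀ a c : Fin n, a ≠ c → ∀ y, Gamma β H a a c y = gam β H a c y := by
    intro a c hac y; simp [Gamma, gam, hac]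
  have hv2 : ∀ a b : Fin n, a ≠ b → ∀ y, Gamma β H a b a y = gam β H a b y := by
    intro a b hab y; simp [Gamma, gam, hab]
  have hv3 : ∀ a b : Fin n, a ≠ b → ∀ y, Gamma β H a b b y = -(gam β H a b y) := by
    intro a b hab y; simp [Gamma, gam, hab]
  have hvd : ∀ (a : Fin n) y,
      Gamma β H a a a y = -∑ p ∈ Finset.univ.erase a, gam β H a p y := by
    intro a y; simp [Gamma, gam]
  -- key differentiated relation
  have hKey : ∀ a b : Fin n, a ≠ b → ∀ m : Fin n,
      pd m (gam β H a b) x * H a x + gam β H a b x * pd m (H a) x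
        = pd m (H b) x * β a b x + H b x * pd m (β a b) x := by
    intro a b hab m
    have h1 : (fun y => gam β H a b y * H a y) =ᶠ[nhds x] fun y => H b y * β a b y := by
      filter_upwards [hmem] with y hy
      have h0 := hH0 a y hy
      simp only [gam]
      field_simp
    have h2 : pd m (fun y => gam β H a b y * H a y) x
        = pd m (fun y => H b y * β a b y) x := by
      simp only [pd]; rw [h1.fderiv_eq]
    rw [pd_mul m (hdγ a b hab) (hdH a), pd_mul m (hdH b) (hdβ a b hab)] at h2
    exact h2
  have hD1 : ∀ a b c : Fin n, a ≠ b → a ≠ c → b ≠ c →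
      pd c (gam β H a b) x = gam β H a b x * gam β H b c x
        + gam β H a c x * gam β H c b x - gam β H a b x * gam β H a c x := by
    intro a b c hab hac hbc
    have e1 := hKey a b hab c
    rw [hL1 a c hac x hx, hL1 b c hbc x hx, hED1 a b c hab hbc hac x hx] at e1
    have ha := hH0 a x hx
    have hb := hH0 b x hx
    have hc := hH0 c x hx
    simp only [gam] at e1 ⊢
    field_simp at e1
    have hP : pd c (gam β H a b) x
        = (β b c x * H c x * β a b x * H a x + H b x * (β a c x * β c b x) * H a x
            - H b x * β a b x * (β a c x * H c x)) / (H a x * H a x) := by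
      rw [eq_div_iff (mul_ne_zero ha ha)]
      linear_combination e1
    rw [hP]
    field_simp
  have hSum0 : ∀ a b : Fin n, a ≠ b → ∑ m, pd m (gam β H a b) x = 0 := by
    intro a b hab
    have e2 : ∑ m, (pd m (gam β H a b) x * H a x + gam β H a b x * pd m (H a) x)
        = ∑ m, (pd m (H b) x * β a b x + H b x * pd m (β a b) x) :=
      Finset.sum_congr rfl fun m _ => hKey a b hab m
    rw [Finset.sum_add_distrib, Finset.sum_add_distrib, ← Finset.sum_mul, ← Finset.mul_sum,
      ← Finset.sum_mul, ← Finset.mul_sum, hL2 a x hx, hL2 b x hx, hED2 a b hab x hx] at e2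
    simp only [zero_mul, mul_zero, add_zero] at e2
    exact (mul_eq_zero.mp e2).resolve_right (hH0 a x hx)
  have hD2 : ∀ a b : Fin n, a ≠ b →
      pd a (gam β H a b) x + pd b (gam β H a b) x
        = -∑ c ∈ (Finset.univ.erase a).erase b,
            (gam β H a b x * gam β H b c x + gam β H a c x * gam β H c b x
              - gam β H a b x * gam β H a c x) := by
    intro a b hab
    have e := hSum0 a b hab
    rw [sum_split2 _ a b hab] at e
    have e' : ∑ c ∈ (Finset.univ.erase a).erase b, pd c (gam β H a b) x
        = ∑ c ∈ (Finset.univ.erase a).erase b,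
            (gam β H a b x * gam β H b c x + gam β H a c x * gam β H c b x
              - gam β H a b x * gam β H a c x) := by
      refine Finset.sum_congr rfl fun c hc => ?_
      have h1 := Finset.mem_erase.1 hc
      have h2 := Finset.mem_erase.1 h1.2
      exact hD1 a b c hab (Ne.symm h2.1) (Ne.symm h1.1)
    rw [e'] at e
    linarith
  -- antisymmetry in the last two indices
  have hanti : ∀ a b c d : Fin n,
      pd c (Gamma β H a d b) x - pd d (Gamma β H a c b) x
        + ∑ m, (Gamma β H a c m x * Gamma β H m d b x
            - Gamma β H a d m x * Gamma β H m c b x)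
      = -(pd d (Gamma β H a c b) x - pd c (Gamma β H a d b) x
        + ∑ m, (Gamma β H a d m x * Gamma β H m c b x
            - Gamma β H a c m x * Gamma β H m d b x)) := by
    intro a b c d
    rw [Finset.sum_sub_distrib, Finset.sum_sub_distrib]
    ring
  -- Case A : all four indices distinct
  have caseA : ∀ a b c d : Fin n, a ≠ b → a ≠ c → a ≠ d → b ≠ c → b ≠ d → c ≠ d →
      pd c (Gamma β H a d b) x - pd d (Gamma β H a c b) x
        + ∑ m, (Gamma β H a c m x * Gamma β H m d b x
            - Gamma β H a d m x * Gamma β H m c b x) = 0 := by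
    intro a b c d hab hac had hbc hbd hcd
    rw [show Gamma β H a d b = (fun _ => (0:ℝ)) from funext fun y => hv0 a d b had hab (Ne.symm hbd) y,
      show Gamma β H a c b = (fun _ => (0:ℝ)) from funext fun y => hv0 a c b hac hab (Ne.symm hbc) y,
      pd_const, pd_const]
    have hs : ∑ m, (Gamma β H a c m x * Gamma β H m d b x
        - Gamma β H a d m x * Gamma β H m c b x) = 0 := by
      refine Finset.sum_eq_zero fun m _ => ?_
      rcases eq_or_ne m a with rfl | hma
      · rw [hv0 m d b had hab (Ne.symm hbd), hv0 m c b hac hab (Ne.symm hbc)]; ring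
      rcases eq_or_ne m c with rfl | hmc
      · rw [hv0 m d b hcd (Ne.symm hbc) (Ne.symm hbd), hv0 a d m had hac (Ne.symm hcd)]; ring
      rcases eq_or_ne m d with rfl | hmd
      · rw [hv0 a c m hac had hcd, hv0 m c b (Ne.symm hcd) (Ne.symm hbd) (Ne.symm hbc)]; ring
      · rw [hv0 a c m hac (Ne.symm hma) (Ne.symm hmc), hv0 a d m had (Ne.symm hma) (Ne.symm hmd)]
        ring
    rw [hs]
    ring
  -- Case B : i = j, and i, k, l distinct
  have caseB : ∀ a c d : Fin n, a ≠ c → a ≠ d → c ≠ d →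
      pd c (Gamma β H a d a) x - pd d (Gamma β H a c a) x
        + ∑ m, (Gamma β H a c m x * Gamma β H m d a x
            - Gamma β H a d m x * Gamma β H m c a x) = 0 := by
    intro a c d hac had hcd
    rw [show Gamma β H a d a = gam β H a d from funext fun y => hv2 a d had y,
      show Gamma β H a c a = gam β H a c from funext fun y => hv2 a c hac y,
      hD1 a d c had hac (Ne.symm hcd), hD1 a c d hac had hcd]
    have hs : ∑ m, (Gamma β H a c m x * Gamma β H m d a x
        - Gamma β H a d m x * Gamma β H m c a x) = 0 := by
      refine Finset.sum_eq_zero fun m _ => ?_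
      rcases eq_or_ne m a with rfl | hma
      · ring
      rcases eq_or_ne m c with rfl | hmc
      · rw [hv0 m d a hcd (Ne.symm hac) (Ne.symm had), hv0 a d m had hac (Ne.symm hcd)]; ring
      rcases eq_or_ne m d with rfl | hmd
      · rw [hv0 a c m hac had hcd, hv0 m c a (Ne.symm hcd) (Ne.symm had) (Ne.symm hac)]; ring
      · rw [hv0 a c m hac (Ne.symm hma) (Ne.symm hmc), hv0 a d m had (Ne.symm hma) (Ne.symm hmd)]
        ring
    rw [hs]
    ring
  -- Case C : i = k, and i, j, l distinct
  have caseC : ∀ a b d : Fin n, a ≠ b → a ≠ d → b ≠ d →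
      pd a (Gamma β H a d b) x - pd d (Gamma β H a a b) x
        + ∑ m, (Gamma β H a a m x * Gamma β H m d b x
            - Gamma β H a d m x * Gamma β H m a b x) = 0 := by
    intro a b d hab had hbd
    rw [show Gamma β H a d b = (fun _ => (0:ℝ)) from funext fun y => hv0 a d b had hab (Ne.symm hbd) y,
      show Gamma β H a a b = gam β H a b from funext fun y => hv1 a b hab y,
      pd_const, hD1 a b d hab had hbd]
    rw [sum_split3 _ a d b had hab (Ne.symm hbd)]
    have hrest : ∑ m ∈ ((Finset.univ.erase a).erase d).erase b,
        (Gamma β H a a m x * Gamma β H m d b x - Gamma β H a d m x * Gamma β H m a b x) = 0 := by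
      refine Finset.sum_eq_zero fun m hm => ?_
      have h1 := Finset.mem_erase.1 hm
      have h2 := Finset.mem_erase.1 h1.2
      have h3 := Finset.mem_erase.1 h2.2
      rw [hv0 m d b h2.1 h1.1 (Ne.symm hbd), hv0 a d m had (Ne.symm h3.1) (Ne.symm h2.1)]
      ring
    rw [hrest]
    simp only [hv0 a d b had hab (Ne.symm hbd), hv2 a d had, hv1 a b hab, hv1 a d had,
      hv1 d b (Ne.symm hbd), hv0 d a b (Ne.symm had) (Ne.symm hbd) hab, hv2 b d hbd]
    ring
  -- Case D : j = k, and i, j, l distinct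
  have caseD : ∀ a b d : Fin n, a ≠ b → a ≠ d → b ≠ d →
      pd b (Gamma β H a d b) x - pd d (Gamma β H a b b) x
        + ∑ m, (Gamma β H a b m x * Gamma β H m d b x
            - Gamma β H a d m x * Gamma β H m b b x) = 0 := by
    intro a b d hab had hbd
    rw [show Gamma β H a d b = (fun _ => (0:ℝ)) from funext fun y => hv0 a d b had hab (Ne.symm hbd) y,
      show Gamma β H a b b = (fun y => -(gam β H a b y)) from funext fun y => hv3 a b hab y,
      pd_const, pd_neg, hD1 a b d hab had hbd]
    rw [sum_split3 _ a b d hab had hbd]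
    have hrest : ∑ m ∈ ((Finset.univ.erase a).erase b).erase d,
        (Gamma β H a b m x * Gamma β H m d b x - Gamma β H a d m x * Gamma β H m b b x) = 0 := by
      refine Finset.sum_eq_zero fun m hm => ?_
      have h1 := Finset.mem_erase.1 hm
      have h2 := Finset.mem_erase.1 h1.2
      have h3 := Finset.mem_erase.1 h2.2
      rw [hv0 a b m hab (Ne.symm h3.1) (Ne.symm h2.1), hv0 a d m had (Ne.symm h3.1) (Ne.symm h1.1)]
      ring
    rw [hrest]
    simp only [hv2 a b hab, hv2 a d had, hv3 a b hab, hv0 a d b had hab (Ne.symm hbd),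
      hv2 b d hbd, hv0 a b d hab had hbd, hv1 d b (Ne.symm hbd), hv3 d b (Ne.symm hbd),
      hv3 a d had]
    ring
  -- Case E : i = j = k, l distinct
  have caseE : ∀ a c : Fin n, a ≠ c →
      pd a (Gamma β H a c a) x - pd c (Gamma β H a a a) x
        + ∑ m, (Gamma β H a a m x * Gamma β H m c a x
            - Gamma β H a c m x * Gamma β H m a a x) = 0 := by
    intro a c hac
    rw [show Gamma β H a c a = gam β H a c from funext fun y => hv2 a c hac y,
      show Gamma β H a a a = (fun y => -(∑ p ∈ Finset.univ.erase a, gam β H a p y)) from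
        funext fun y => hvd a y,
      pd_neg, pd_sum _ c (fun p hp => hdγ a p (Ne.symm (Finset.mem_erase.1 hp).1))]
    have hq : ∑ m, (Gamma β H a a m x * Gamma β H m c a x
        - Gamma β H a c m x * Gamma β H m a a x) = 0 := by
      refine Finset.sum_eq_zero fun m _ => ?_
      rcases eq_or_ne m a with rfl | hma
      · ring
      rcases eq_or_ne m c with rfl | hmc
      · rw [hv1 a m hac, hv1 m a (Ne.symm hac), hv3 a m hac, hv3 m a (Ne.symm hac)]; ring
      · rw [hv0 m c a hmc hma (Ne.symm hac), hv0 a c m hac (Ne.symm hma) (Ne.symm hmc)]; ring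
    rw [hq]
    rw [← Finset.add_sum_erase _ _ (Finset.mem_erase.2 ⟨Ne.symm hac, Finset.mem_univ c⟩)]
    have e4 : ∑ p ∈ (Finset.univ.erase a).erase c, pd c (gam β H a p) x
        = ∑ p ∈ (Finset.univ.erase a).erase c,
            (gam β H a c x * gam β H c p x + gam β H a p x * gam β H p c x
              - gam β H a c x * gam β H a p x) := by
      refine Finset.sum_congr rfl fun p hp => ?_
      have h1 := Finset.mem_erase.1 hp
      have h2 := Finset.mem_erase.1 h1.2
      rw [hD1 a p c (Ne.symm h2.1) hac h1.1]
      ring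
    rw [e4]
    have e5 := hD2 a c hac
    linarith
  -- Case F : i = k, j = l
  have caseF : ∀ a b : Fin n, a ≠ b →
      pd a (Gamma β H a b b) x - pd b (Gamma β H a a b) x
        + ∑ m, (Gamma β H a a m x * Gamma β H m b b x
            - Gamma β H a b m x * Gamma β H m a b x) = 0 := by
    intro a b hab
    rw [show Gamma β H a b b = (fun y => -(gam β H a b y)) from funext fun y => hv3 a b hab y,
      show Gamma β H a a b = gam β H a b from funext fun y => hv1 a b hab y,
      pd_neg]
    rw [sum_split2 _ a b hab]
    have hrest : ∑ m ∈ (Finset.univ.erase a).erase b,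
        (Gamma β H a a m x * Gamma β H m b b x - Gamma β H a b m x * Gamma β H m a b x)
        = -∑ m ∈ (Finset.univ.erase a).erase b, gam β H a m x * gam β H m b x := by
      rw [← Finset.sum_neg_distrib]
      refine Finset.sum_congr rfl fun m hm => ?_
      have h1 := Finset.mem_erase.1 hm
      have h2 := Finset.mem_erase.1 h1.2
      rw [hv1 a m (Ne.symm h2.1), hv3 m b h1.1, hv0 a b m hab (Ne.symm h2.1) (Ne.symm h1.1)]
      ring
    rw [hrest]
    simp only [hvd a, hvd b, hv3 a b hab, hv2 a b hab, hv1 a b hab, hv2 b a (Ne.symm hab)]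
    rw [← Finset.add_sum_erase (Finset.univ.erase a) (fun p => gam β H a p x)
        (Finset.mem_erase.2 ⟨Ne.symm hab, Finset.mem_univ b⟩),
      ← Finset.add_sum_erase (Finset.univ.erase b) (fun p => gam β H b p x)
        (Finset.mem_erase.2 ⟨hab, Finset.mem_univ a⟩),
      show (Finset.univ.erase b).erase a = (Finset.univ.erase a).erase b from
        Finset.erase_right_comm]
    have e5 := hD2 a b hab
    rw [Finset.sum_sub_distrib, Finset.sum_add_distrib, ← Finset.mul_sum, ← Finset.mul_sum] at e5
    linear_combination -e5
  -- the case analysis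
  by_cases hkl : k = l
  · subst hkl
    simp
  rcases eq_or_ne i j with rfl | hij
  · rcases eq_or_ne i k with rfl | hik
    · exact caseE i l hkl
    · rcases eq_or_ne i l with rfl | hil
      · rw [hanti i i k i, caseE i k hik]
        exact neg_zero
      · exact caseB i k l hik hil hkl
  · rcases eq_or_ne i k with rfl | hik
    · rcases eq_or_ne j l with rfl | hjl
      · exact caseF i j hij
      · exact caseC i j l hij hkl hjl
    · rcases eq_or_ne i l with rfl | hil
      · rcases eq_or_ne j k with rfl | hjk
        · rw [hanti i j j i, caseF i j hij]
          exact neg_zero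
        · rw [hanti i j k i, caseC i j k hij hik hjk]
          exact neg_zero
      · rcases eq_or_ne j k with rfl | hjk
        · exact caseD i j l hij hil hkl
        · rcases eq_or_ne j l with rfl | hjl
          · rw [hanti i j k j, caseD i j k hij hik hjk]
            exact neg_zero
          · exact caseA i j k l hij hik hil hjk hjl hkl
end

section
/- Fix d₁, d₂, d₃ ∈ ℝ and set d_ij := d_i − d_j. Let U = {(u¹,u²,u³) ∈ ℝ³ : u¹ < u² < u³} and z(u) = (u³−u¹)/(u²−u¹), which takes values in (1,∞) on U. Let F₁₂, F₂₁, F₁₃, F₃₁, F₂₃, F₃₂ be smooth functions on (1,∞), and define on U: β₁₂ = (u²−u¹)^{d₁−d₂−1} F₁₂(z), β₂₁ = (u²−u¹)^{d₂−d₁−1} F₂₁(z), β₃₂ = (u²−u¹)^{d₃−d₂}(u³−u²)^{−1} F₃₂(z), β₂₃ = (u²−u¹)^{d₂−d₃}(u³−u²)^{−1} F₂₃(z), β₁₃ = (u²−u¹)^{d₁−d₃}(u³−u¹)^{−1} F₁₃(z), β₃₁ = (u²−u¹)^{d₃−d₁}(u³−u¹)^{−1} F₃₁(z). Then the β_ij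 satisfy the Darboux–Egorov system with homogeneity, i.e. (ED1) ∂_k β_ij = β_ik β_kj for pairwise distinct i,j,k, (ED2) e(β_ij) = 0, and (ED3) E(β_ij) = (d_i − d_j − 1) β_ij on U, if and only if the F_ij satisfy on (1,∞) the ODE system: F₁₂' = F₁₃F₃₂/(z(z−1)); F₁₃' = −F₁₂F₂₃/(z−1) + d₁₃F₁₃/z; F₂₁' = F₂₃F₃₁/(z(z−1)); F₂₃' = F₂₁F₁₃/z + d₂₃F₂₃/(z−1); F₃₁' = −F₃₂F₂₁/(z−1) − d₁₃F₃₁/z; F₃₂' = F₃₁F₁₂/z − d₂₃F₃₂/(z−1). -/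
/-- The domain `U = {u¹ < u² < u³} ⊆ ℝ³`. -/
def U3 : Set (Fin 3 → ℝ) := {x | x 0 < x 1 ∧ x 1 < x 2}

/-- The rotation coefficients `β_ij` built from the functions `F_ij` of the single
variable `z = (u³-u¹)/(u²-u¹)` via the homogeneous ansatz (indices shifted by one:
`0,1,2` stand for `1,2,3`). -/
noncomputable def B3 (d : Fin 3 → ℝ) (F12 F21 F13 F31 F23 F32 : ℝ → ℝ) :
    Fin 3 → Fin 3 → (Fin 3 → ℝ) → ℝ :=
  ![![fun _ => 0,
      fun x => (x 1 - x 0) ^ (d 0 - d 1 - 1) * F12 ((x 2 - x 0) / (x 1 - x 0)),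
      fun x => (x 1 - x 0) ^ (d 0 - d 2) * (x 2 - x 0)⁻¹ * F13 ((x 2 - x 0) / (x 1 - x 0))],
    ![fun x => (x 1 - x 0) ^ (d 1 - d 0 - 1) * F21 ((x 2 - x 0) / (x 1 - x 0)),
      fun _ => 0,
      fun x => (x 1 - x 0) ^ (d 1 - d 2) * (x 2 - x 1)⁻¹ * F23 ((x 2 - x 0) / (x 1 - x 0))],
    ![fun x => (x 1 - x 0) ^ (d 2 - d 0) * (x 2 - x 0)⁻¹ * F31 ((x 2 - x 0) / (x 1 - x 0)),
      fun x => (x 1 - x 0) ^ (d 2 - d 1) * (x 2 - x 1)⁻¹ * F32 ((x 2 - x 0) / (x 1 - x 0)),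
      fun _ => 0]]


open Real

set_option maxHeartbeats 1000000 in
lemma pd_gen (a p q : ℝ) (F : ℝ → ℝ) (x : Fin 3 → ℝ) (hx : x ∈ U3)
    (hF : DifferentiableAt ℝ F ((x 2 - x 0) / (x 1 - x 0))) (k : Fin 3) :
    pd k (fun y => (y 1 - y 0) ^ a * (y 2 - y 0) ^ p * (y 2 - y 1) ^ q *
        F ((y 2 - y 0) / (y 1 - y 0))) x =
    (x 1 - x 0) ^ a * (x 2 - x 0) ^ p * (x 2 - x 1) ^ q *
      ((a * (x 1 - x 0)⁻¹ * (![(-1:ℝ),1,0] k) + p * (x 2 - x 0)⁻¹ * (![(-1:ℝ),0,1] k)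
          + q * (x 2 - x 1)⁻¹ * (![(0:ℝ),-1,1] k)) * F ((x 2 - x 0) / (x 1 - x 0))
        + deriv F ((x 2 - x 0) / (x 1 - x 0)) *
          ((x 1 - x 0)⁻¹ * (![(-1:ℝ),0,1] k)
            - (x 2 - x 0) * ((x 1 - x 0) ^ (2:ℕ))⁻¹ * (![(-1:ℝ),1,0] k))) := by
  obtain ⟨h01, h12⟩ := hx
  have hs : (0:ℝ) < x 1 - x 0 := by linarith
  have ht : (0:ℝ) < x 2 - x 0 := by linarith
  have hr : (0:ℝ) < x 2 - x 1 := by linarith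
  have hproj : ∀ i : Fin 3, HasFDerivAt (fun y : Fin 3 → ℝ => y i)
      (ContinuousLinearMap.proj i : (Fin 3 → ℝ) →L[ℝ] ℝ) x := fun i =>
    (ContinuousLinearMap.proj (R := ℝ) (φ := fun _ : Fin 3 => ℝ) i).hasFDerivAt
  have hS : HasFDerivAt (fun y : Fin 3 → ℝ => y 1 - y 0)
      ((ContinuousLinearMap.proj (1:Fin 3) : (Fin 3 → ℝ) →L[ℝ] ℝ) - ContinuousLinearMap.proj (0:Fin 3)) x :=
    (hproj 1).sub (hproj 0)
  have hT : HasFDerivAt (fun y : Fin 3 → ℝ => y 2 - y 0)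
      ((ContinuousLinearMap.proj (2:Fin 3) : (Fin 3 → ℝ) →L[ℝ] ℝ) - ContinuousLinearMap.proj (0:Fin 3)) x :=
    (hproj 2).sub (hproj 0)
  have hR : HasFDerivAt (fun y : Fin 3 → ℝ => y 2 - y 1)
      ((ContinuousLinearMap.proj (2:Fin 3) : (Fin 3 → ℝ) →L[ℝ] ℝ) - ContinuousLinearMap.proj (1:Fin 3)) x :=
    (hproj 2).sub (hproj 1)
  have hA := hS.rpow_const (p := a) (Or.inl hs.ne')
  have hP := hT.rpow_const (p := p) (Or.inl ht.ne')
  have hQ := hR.rpow_const (p := q) (Or.inl hr.ne')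
  have e : (fun y : Fin 3 → ℝ => (y 2 - y 0) / (y 1 - y 0))
      = fun y => (y 2 - y 0) * (y 1 - y 0) ^ (-1:ℝ) := by
    funext y; rw [Real.rpow_neg_one, div_eq_mul_inv]
  have hZ0 := hT.fun_mul (hS.rpow_const (p := (-1:ℝ)) (Or.inl hs.ne'))
  rw [← e] at hZ0
  have hval : (fun y : Fin 3 → ℝ => (y 2 - y 0) / (y 1 - y 0)) x
      = (x 2 - x 0) / (x 1 - x 0) := rfl
  have hFc := (hF.hasDerivAt).comp_hasFDerivAt x hZ0
  have htot := ((hA.fun_mul hP).fun_mul hQ).fun_mul hFc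
  simp only [Function.comp] at htot
  rw [pd, htot.fderiv]
  have hz2 : x 1 - x 0 ≠ 0 := hs.ne'
  have e1 : (x 1 - x 0) ^ (a-1) = (x 1 - x 0) ^ a / (x 1 - x 0) := by
    rw [Real.rpow_sub hs, Real.rpow_one]
  have e2 : (x 2 - x 0) ^ (p-1) = (x 2 - x 0) ^ p / (x 2 - x 0) := by
    rw [Real.rpow_sub ht, Real.rpow_one]
  have e3 : (x 2 - x 1) ^ (q-1) = (x 2 - x 1) ^ q / (x 2 - x 1) := by
    rw [Real.rpow_sub hr, Real.rpow_one]
  have e4 : (x 1 - x 0) ^ ((-1:ℝ)-1) = ((x 1 - x 0) ^ (2:ℕ))⁻¹ := by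
    rw [show ((-1:ℝ)-1) = -((2:ℕ):ℝ) by norm_num, Real.rpow_neg hs.le, Real.rpow_natCast]
  have e5 : (x 1 - x 0) ^ (-1:ℝ) = (x 1 - x 0)⁻¹ := Real.rpow_neg_one _
  simp only [ContinuousLinearMap.add_apply, ContinuousLinearMap.smul_apply,
    ContinuousLinearMap.sub_apply, ContinuousLinearMap.proj_apply, smul_eq_mul,
    e1, e2, e3, e4, e5]
  have p0 : (Pi.single (0:Fin 3) (1:ℝ)) = ![1,0,0] := by
    funext i; fin_cases i <;> simp
  have p1 : (Pi.single (1:Fin 3) (1:ℝ)) = ![0,1,0] := by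
    funext i; fin_cases i <;> simp
  have p2 : (Pi.single (2:Fin 3) (1:ℝ)) = ![0,0,1] := by
    funext i; fin_cases i <;> simp
  fin_cases k <;>
    [rw [show (⟨0, by norm_num⟩ : Fin 3) = 0 from rfl] <;> rw [p0];
     rw [show (⟨1, by norm_num⟩ : Fin 3) = 1 from rfl] <;> rw [p1];
     rw [show (⟨2, by norm_num⟩ : Fin 3) = 2 from rfl] <;> rw [p2]] <;>
  simp only [Matrix.cons_val_zero, Matrix.cons_val_one, Matrix.head_cons,
    Matrix.cons_val_two, Matrix.tail_cons] <;>
  ring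

lemma pd_form1 (a : ℝ) (F : ℝ → ℝ) (x : Fin 3 → ℝ) (hx : x ∈ U3)
    (hF : DifferentiableAt ℝ F ((x 2 - x 0) / (x 1 - x 0))) (k : Fin 3) :
    pd k (fun y => (y 1 - y 0) ^ a * F ((y 2 - y 0) / (y 1 - y 0))) x =
    (x 1 - x 0) ^ a *
      ((a * (x 1 - x 0)⁻¹ * (![(-1:ℝ),1,0] k)) * F ((x 2 - x 0) / (x 1 - x 0))
        + deriv F ((x 2 - x 0) / (x 1 - x 0)) *
          ((x 1 - x 0)⁻¹ * (![(-1:ℝ),0,1] k)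
            - (x 2 - x 0) * ((x 1 - x 0) ^ (2:ℕ))⁻¹ * (![(-1:ℝ),1,0] k))) := by
  have efun : (fun y : Fin 3 → ℝ => (y 1 - y 0) ^ a * F ((y 2 - y 0) / (y 1 - y 0)))
      = (fun y : Fin 3 → ℝ => (y 1 - y 0) ^ a * (y 2 - y 0) ^ (0:ℝ) * (y 2 - y 1) ^ (0:ℝ) *
          F ((y 2 - y 0) / (y 1 - y 0))) := by
    funext y; rw [Real.rpow_zero, Real.rpow_zero, mul_one, mul_one]
  rw [efun, pd_gen a 0 0 F x hx hF k, Real.rpow_zero, Real.rpow_zero]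
  ring

lemma pd_form2 (a : ℝ) (F : ℝ → ℝ) (x : Fin 3 → ℝ) (hx : x ∈ U3)
    (hF : DifferentiableAt ℝ F ((x 2 - x 0) / (x 1 - x 0))) (k : Fin 3) :
    pd k (fun y => (y 1 - y 0) ^ a * (y 2 - y 0)⁻¹ * F ((y 2 - y 0) / (y 1 - y 0))) x =
    (x 1 - x 0) ^ a * (x 2 - x 0)⁻¹ *
      ((a * (x 1 - x 0)⁻¹ * (![(-1:ℝ),1,0] k) - (x 2 - x 0)⁻¹ * (![(-1:ℝ),0,1] k))
          * F ((x 2 - x 0) / (x 1 - x 0))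
        + deriv F ((x 2 - x 0) / (x 1 - x 0)) *
          ((x 1 - x 0)⁻¹ * (![(-1:ℝ),0,1] k)
            - (x 2 - x 0) * ((x 1 - x 0) ^ (2:ℕ))⁻¹ * (![(-1:ℝ),1,0] k))) := by
  have efun : (fun y : Fin 3 → ℝ => (y 1 - y 0) ^ a * (y 2 - y 0)⁻¹ *
        F ((y 2 - y 0) / (y 1 - y 0)))
      = (fun y : Fin 3 → ℝ => (y 1 - y 0) ^ a * (y 2 - y 0) ^ (-1:ℝ) * (y 2 - y 1) ^ (0:ℝ) *
          F ((y 2 - y 0) / (y 1 - y 0))) := by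
    funext y; rw [Real.rpow_zero, mul_one, Real.rpow_neg_one]
  rw [efun, pd_gen a (-1) 0 F x hx hF k, Real.rpow_zero, Real.rpow_neg_one]
  ring

lemma pd_form3 (a : ℝ) (F : ℝ → ℝ) (x : Fin 3 → ℝ) (hx : x ∈ U3)
    (hF : DifferentiableAt ℝ F ((x 2 - x 0) / (x 1 - x 0))) (k : Fin 3) :
    pd k (fun y => (y 1 - y 0) ^ a * (y 2 - y 1)⁻¹ * F ((y 2 - y 0) / (y 1 - y 0))) x =
    (x 1 - x 0) ^ a * (x 2 - x 1)⁻¹ *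
      ((a * (x 1 - x 0)⁻¹ * (![(-1:ℝ),1,0] k) - (x 2 - x 1)⁻¹ * (![(0:ℝ),-1,1] k))
          * F ((x 2 - x 0) / (x 1 - x 0))
        + deriv F ((x 2 - x 0) / (x 1 - x 0)) *
          ((x 1 - x 0)⁻¹ * (![(-1:ℝ),0,1] k)
            - (x 2 - x 0) * ((x 1 - x 0) ^ (2:ℕ))⁻¹ * (![(-1:ℝ),1,0] k))) := by
  have efun : (fun y : Fin 3 → ℝ => (y 1 - y 0) ^ a * (y 2 - y 1)⁻¹ *
        F ((y 2 - y 0) / (y 1 - y 0)))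
      = (fun y : Fin 3 → ℝ => (y 1 - y 0) ^ a * (y 2 - y 0) ^ (0:ℝ) * (y 2 - y 1) ^ (-1:ℝ) *
          F ((y 2 - y 0) / (y 1 - y 0))) := by
    funext y; rw [Real.rpow_zero, Real.rpow_neg_one]; ring
  rw [efun, pd_gen a 0 (-1) F x hx hF k, Real.rpow_zero, Real.rpow_neg_one]
  ring

lemma diffat {F : ℝ → ℝ} (h : ContDiffOn ℝ (⊤ : ℕ∞) F (Set.Ioi (1:ℝ))) {z : ℝ} (hz : 1 < z) :
    DifferentiableAt ℝ F z :=
  (h.contDiffAt (Ioi_mem_nhds hz)).differentiableAt (by simp)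

lemma zmem {x : Fin 3 → ℝ} (hx : x ∈ U3) : 1 < (x 2 - x 0) / (x 1 - x 0) := by
  obtain ⟨h01, h12⟩ := hx
  rw [lt_div_iff₀ (by linarith)]
  linarith

set_option maxHeartbeats 2000000 in
theorem darboux_egorov_iff_reduced_ODE_system (d : Fin 3 → ℝ)
    (F12 F21 F13 F31 F23 F32 : ℝ → ℝ)
    (h12 : ContDiffOn ℝ (⊤ : ℕ∞) F12 (Set.Ioi (1 : ℝ)))
    (h21 : ContDiffOn ℝ (⊤ : ℕ∞) F21 (Set.Ioi (1 : ℝ)))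
    (h13 : ContDiffOn ℝ (⊤ : ℕ∞) F13 (Set.Ioi (1 : ℝ)))
    (h31 : ContDiffOn ℝ (⊤ : ℕ∞) F31 (Set.Ioi (1 : ℝ)))
    (h23 : ContDiffOn ℝ (⊤ : ℕ∞) F23 (Set.Ioi (1 : ℝ)))
    (h32 : ContDiffOn ℝ (⊤ : ℕ∞) F32 (Set.Ioi (1 : ℝ)))
    (β : Fin 3 → Fin 3 → (Fin 3 → ℝ) → ℝ)
    (hβ : β = B3 d F12 F21 F13 F31 F23 F32) :
    ((∀ i j k : Fin 3, i ≠ j → j ≠ k → i ≠ k →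
        ∀ x ∈ U3, pd k (β i j) x = β i k x * β k j x) ∧
     (∀ i j : Fin 3, i ≠ j → ∀ x ∈ U3, ∑ l, pd l (β i j) x = 0) ∧
     (∀ i j : Fin 3, i ≠ j → ∀ x ∈ U3,
        ∑ l, x l * pd l (β i j) x = (d i - d j - 1) * β i j x))
    ↔
    (∀ z ∈ Set.Ioi (1 : ℝ),
      deriv F12 z = F13 z * F32 z / (z * (z - 1)) ∧
      deriv F13 z = -(F12 z * F23 z) / (z - 1) + (d 0 - d 2) * F13 z / z ∧
      deriv F21 z = F23 z * F31 z / (z * (z - 1)) ∧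
      deriv F23 z = F21 z * F13 z / z + (d 1 - d 2) * F23 z / (z - 1) ∧
      deriv F31 z = -(F32 z * F21 z) / (z - 1) - (d 0 - d 2) * F31 z / z ∧
      deriv F32 z = F31 z * F12 z / z - (d 1 - d 2) * F32 z / (z - 1)) := by
  subst hβ
  constructor
  · rintro ⟨hED1, -, -⟩ z hz
    rw [Set.mem_Ioi] at hz
    set x : Fin 3 → ℝ := ![0, 1, z] with hxdef
    have hx0 : x 0 = 0 := rfl
    have hx1 : x 1 = 1 := rfl
    have hx2 : x 2 = z := rfl
    have hxU : x ∈ U3 := by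
      exact ⟨by rw [hx0, hx1]; norm_num, by rw [hx1, hx2]; exact hz⟩
    have hzx : (x 2 - x 0) / (x 1 - x 0) = z := by rw [hx0, hx1, hx2]; norm_num
    have hzg : (1:ℝ) < (x 2 - x 0) / (x 1 - x 0) := by rw [hzx]; exact hz
    have hz0 : z ≠ 0 := by positivity
    have hz1 : z - 1 ≠ 0 := by intro h; apply hz.ne'; linarith
    refine ⟨?_, ?_, ?_, ?_, ?_, ?_⟩
    · have e := hED1 0 1 2 (by decide) (by decide) (by decide) x hxU
      simp only [B3, Matrix.cons_val_zero, Matrix.cons_val_one, Matrix.head_cons,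
        Matrix.cons_val_two, Matrix.tail_cons] at e
      rw [pd_form1 _ _ _ hxU (diffat h12 hzg) 2] at e
      simp only [hzx, hx0, hx1, hx2, Matrix.cons_val_zero, Matrix.cons_val_one,
        Matrix.head_cons, Matrix.cons_val_two, Matrix.tail_cons] at e
      norm_num [Real.one_rpow] at e
      field_simp at e ⊢
      first
        | linear_combination e | linear_combination -e
        | linear_combination z*e | linear_combination -z*e
        | linear_combination (z-1)*e | linear_combination -(z-1)*e
    · have e := hED1 0 2 1 (by decide) (by decide) (by decide) x hxU
      simp only [B3, Matrix.cons_val_zero, Matrix.cons_val_one, Matrix.head_cons,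
        Matrix.cons_val_two, Matrix.tail_cons] at e
      rw [pd_form2 _ _ _ hxU (diffat h13 hzg) 1] at e
      simp only [hzx, hx0, hx1, hx2, Matrix.cons_val_zero, Matrix.cons_val_one,
        Matrix.head_cons, Matrix.cons_val_two, Matrix.tail_cons] at e
      norm_num [Real.one_rpow] at e
      field_simp at e ⊢
      first
        | linear_combination e | linear_combination -e
        | linear_combination z*e | linear_combination -z*e
        | linear_combination (z-1)*e | linear_combination -(z-1)*e
    · have e := hED1 1 0 2 (by decide) (by decide) (by decide) x hxU
      simp only [B3, Matrix.cons_val_zero, Matrix.cons_val_one, Matrix.head_cons,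
        Matrix.cons_val_two, Matrix.tail_cons] at e
      rw [pd_form1 _ _ _ hxU (diffat h21 hzg) 2] at e
      simp only [hzx, hx0, hx1, hx2, Matrix.cons_val_zero, Matrix.cons_val_one,
        Matrix.head_cons, Matrix.cons_val_two, Matrix.tail_cons] at e
      norm_num [Real.one_rpow] at e
      field_simp at e ⊢
      first
        | linear_combination e | linear_combination -e
        | linear_combination z*e | linear_combination -z*e
        | linear_combination (z-1)*e | linear_combination -(z-1)*e
    · have e := hED1 1 2 0 (by decide) (by decide) (by decide) x hxU
      simp only [B3, Matrix.cons_val_zero, Matrix.cons_val_one, Matrix.head_cons,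
        Matrix.cons_val_two, Matrix.tail_cons] at e
      rw [pd_form3 _ _ _ hxU (diffat h23 hzg) 0] at e
      simp only [hzx, hx0, hx1, hx2, Matrix.cons_val_zero, Matrix.cons_val_one,
        Matrix.head_cons, Matrix.cons_val_two, Matrix.tail_cons] at e
      norm_num [Real.one_rpow] at e
      field_simp at e ⊢
      first
        | linear_combination e | linear_combination -e
        | linear_combination z*e | linear_combination -z*e
        | linear_combination (z-1)*e | linear_combination -(z-1)*e
    · have e := hED1 2 0 1 (by decide) (by decide) (by decide) x hxU
      simp only [B3, Matrix.cons_val_zero, Matrix.cons_val_one, Matrix.head_cons,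
        Matrix.cons_val_two, Matrix.tail_cons] at e
      rw [pd_form2 _ _ _ hxU (diffat h31 hzg) 1] at e
      simp only [hzx, hx0, hx1, hx2, Matrix.cons_val_zero, Matrix.cons_val_one,
        Matrix.head_cons, Matrix.cons_val_two, Matrix.tail_cons] at e
      norm_num [Real.one_rpow] at e
      field_simp at e ⊢
      first
        | linear_combination e | linear_combination -e
        | linear_combination z*e | linear_combination -z*e
        | linear_combination (z-1)*e | linear_combination -(z-1)*e
    · have e := hED1 2 1 0 (by decide) (by decide) (by decide) x hxU
      simp only [B3, Matrix.cons_val_zero, Matrix.cons_val_one, Matrix.head_cons,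
        Matrix.cons_val_two, Matrix.tail_cons] at e
      rw [pd_form3 _ _ _ hxU (diffat h32 hzg) 0] at e
      simp only [hzx, hx0, hx1, hx2, Matrix.cons_val_zero, Matrix.cons_val_one,
        Matrix.head_cons, Matrix.cons_val_two, Matrix.tail_cons] at e
      norm_num [Real.one_rpow] at e
      field_simp at e ⊢
      first
        | linear_combination e | linear_combination -e
        | linear_combination z*e | linear_combination -z*e
        | linear_combination (z-1)*e | linear_combination -(z-1)*e
  · rintro hODE
    have common : ∀ x ∈ U3, True := fun _ _ => trivial
    refine ⟨?_, ?_, ?_⟩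
    · intro i j k hij hjk hik x hx
      have hzg := zmem hx
      obtain ⟨h01, h12'⟩ := hx
      have hx' : x ∈ U3 := ⟨h01, h12'⟩
      have hs : (0:ℝ) < x 1 - x 0 := by linarith
      have ht : (0:ℝ) < x 2 - x 0 := by linarith
      have hr : (0:ℝ) < x 2 - x 1 := by linarith
      obtain ⟨o12, o13, o21, o23, o31, o32⟩ := hODE _ (Set.mem_Ioi.mpr hzg)
      have hzne : (x 2 - x 0) / (x 1 - x 0) ≠ 0 := by positivity
      have hzne1 : (x 2 - x 0) / (x 1 - x 0) - 1 ≠ 0 := sub_ne_zero.mpr hzg.ne'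
      have hA0 : ∀ u : ℝ, (x 1 - x 0) ^ u ≠ 0 := fun u => (Real.rpow_pos_of_pos hs u).ne'
      fin_cases i <;> fin_cases j <;> fin_cases k <;>
        first
          | exact absurd rfl hij
          | exact absurd rfl hjk
          | exact absurd rfl hik
          | skip
      · -- (0,1,2)
        simp only [Fin.zero_eta, Fin.mk_one, Fin.reduceFinMk, Fin.isValue, B3, Matrix.cons_val_zero, Matrix.cons_val_one, Matrix.head_cons,
          Matrix.cons_val_two, Matrix.tail_cons]
        rw [pd_form1 _ _ _ hx' (diffat h12 hzg) 2]
        simp only [Matrix.cons_val_zero, Matrix.cons_val_one, Matrix.head_cons,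
          Matrix.cons_val_two, Matrix.tail_cons, Real.rpow_sub hs, Real.rpow_one, o12]
        field_simp [hr.ne']
        ring
      · -- (0,2,1)
        simp only [Fin.zero_eta, Fin.mk_one, Fin.reduceFinMk, Fin.isValue, B3, Matrix.cons_val_zero, Matrix.cons_val_one, Matrix.head_cons,
          Matrix.cons_val_two, Matrix.tail_cons]
        rw [pd_form2 _ _ _ hx' (diffat h13 hzg) 1]
        simp only [Matrix.cons_val_zero, Matrix.cons_val_one, Matrix.head_cons,
          Matrix.cons_val_two, Matrix.tail_cons, Real.rpow_sub hs, Real.rpow_one, o13]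
        field_simp [hr.ne']
        ring
      · -- (1,0,2)
        simp only [Fin.zero_eta, Fin.mk_one, Fin.reduceFinMk, Fin.isValue, B3, Matrix.cons_val_zero, Matrix.cons_val_one, Matrix.head_cons,
          Matrix.cons_val_two, Matrix.tail_cons]
        rw [pd_form1 _ _ _ hx' (diffat h21 hzg) 2]
        simp only [Matrix.cons_val_zero, Matrix.cons_val_one, Matrix.head_cons,
          Matrix.cons_val_two, Matrix.tail_cons, Real.rpow_sub hs, Real.rpow_one, o21]
        field_simp [hr.ne']
        ring
      · -- (1,2,0)
        simp only [Fin.zero_eta, Fin.mk_one, Fin.reduceFinMk, Fin.isValue, B3, Matrix.cons_val_zero, Matrix.cons_val_one, Matrix.head_cons,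
          Matrix.cons_val_two, Matrix.tail_cons]
        rw [pd_form3 _ _ _ hx' (diffat h23 hzg) 0]
        simp only [Matrix.cons_val_zero, Matrix.cons_val_one, Matrix.head_cons,
          Matrix.cons_val_two, Matrix.tail_cons, Real.rpow_sub hs, Real.rpow_one, o23]
        field_simp [hr.ne']
        ring
      · -- (2,0,1)
        simp only [Fin.zero_eta, Fin.mk_one, Fin.reduceFinMk, Fin.isValue, B3, Matrix.cons_val_zero, Matrix.cons_val_one, Matrix.head_cons,
          Matrix.cons_val_two, Matrix.tail_cons]
        rw [pd_form2 _ _ _ hx' (diffat h31 hzg) 1]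
        simp only [Matrix.cons_val_zero, Matrix.cons_val_one, Matrix.head_cons,
          Matrix.cons_val_two, Matrix.tail_cons, Real.rpow_sub hs, Real.rpow_one, o31]
        field_simp [hr.ne']
        ring
      · -- (2,1,0)
        simp only [Fin.zero_eta, Fin.mk_one, Fin.reduceFinMk, Fin.isValue, B3, Matrix.cons_val_zero, Matrix.cons_val_one, Matrix.head_cons,
          Matrix.cons_val_two, Matrix.tail_cons]
        rw [pd_form3 _ _ _ hx' (diffat h32 hzg) 0]
        simp only [Matrix.cons_val_zero, Matrix.cons_val_one, Matrix.head_cons,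
          Matrix.cons_val_two, Matrix.tail_cons, Real.rpow_sub hs, Real.rpow_one, o32]
        field_simp [hr.ne']
        ring
    · intro i j hij x hx
      have hzg := zmem hx
      obtain ⟨h01, h12'⟩ := hx
      have hx' : x ∈ U3 := ⟨h01, h12'⟩
      have hs : (0:ℝ) < x 1 - x 0 := by linarith
      have ht : (0:ℝ) < x 2 - x 0 := by linarith
      have hr : (0:ℝ) < x 2 - x 1 := by linarith
      rw [Fin.sum_univ_three]
      fin_cases i <;> fin_cases j <;>
        first
          | exact absurd rfl hij
          | skip
      · simp only [Fin.zero_eta, Fin.mk_one, Fin.reduceFinMk, Fin.isValue, B3, Matrix.cons_val_zero, Matrix.cons_val_one, Matrix.head_cons,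
          Matrix.cons_val_two, Matrix.tail_cons]
        rw [pd_form1 _ _ _ hx' (diffat h12 hzg) 0, pd_form1 _ _ _ hx' (diffat h12 hzg) 1,
          pd_form1 _ _ _ hx' (diffat h12 hzg) 2]
        simp only [Matrix.cons_val_zero, Matrix.cons_val_one, Matrix.head_cons,
          Matrix.cons_val_two, Matrix.tail_cons]
        ring
      · simp only [Fin.zero_eta, Fin.mk_one, Fin.reduceFinMk, Fin.isValue, B3, Matrix.cons_val_zero, Matrix.cons_val_one, Matrix.head_cons,
          Matrix.cons_val_two, Matrix.tail_cons]
        rw [pd_form2 _ _ _ hx' (diffat h13 hzg) 0, pd_form2 _ _ _ hx' (diffat h13 hzg) 1,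
          pd_form2 _ _ _ hx' (diffat h13 hzg) 2]
        simp only [Matrix.cons_val_zero, Matrix.cons_val_one, Matrix.head_cons,
          Matrix.cons_val_two, Matrix.tail_cons]
        ring
      · simp only [Fin.zero_eta, Fin.mk_one, Fin.reduceFinMk, Fin.isValue, B3, Matrix.cons_val_zero, Matrix.cons_val_one, Matrix.head_cons,
          Matrix.cons_val_two, Matrix.tail_cons]
        rw [pd_form1 _ _ _ hx' (diffat h21 hzg) 0, pd_form1 _ _ _ hx' (diffat h21 hzg) 1,
          pd_form1 _ _ _ hx' (diffat h21 hzg) 2]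
        simp only [Matrix.cons_val_zero, Matrix.cons_val_one, Matrix.head_cons,
          Matrix.cons_val_two, Matrix.tail_cons]
        ring
      · simp only [Fin.zero_eta, Fin.mk_one, Fin.reduceFinMk, Fin.isValue, B3, Matrix.cons_val_zero, Matrix.cons_val_one, Matrix.head_cons,
          Matrix.cons_val_two, Matrix.tail_cons]
        rw [pd_form3 _ _ _ hx' (diffat h23 hzg) 0, pd_form3 _ _ _ hx' (diffat h23 hzg) 1,
          pd_form3 _ _ _ hx' (diffat h23 hzg) 2]
        simp only [Matrix.cons_val_zero, Matrix.cons_val_one, Matrix.head_cons,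
          Matrix.cons_val_two, Matrix.tail_cons]
        ring
      · simp only [Fin.zero_eta, Fin.mk_one, Fin.reduceFinMk, Fin.isValue, B3, Matrix.cons_val_zero, Matrix.cons_val_one, Matrix.head_cons,
          Matrix.cons_val_two, Matrix.tail_cons]
        rw [pd_form2 _ _ _ hx' (diffat h31 hzg) 0, pd_form2 _ _ _ hx' (diffat h31 hzg) 1,
          pd_form2 _ _ _ hx' (diffat h31 hzg) 2]
        simp only [Matrix.cons_val_zero, Matrix.cons_val_one, Matrix.head_cons,
          Matrix.cons_val_two, Matrix.tail_cons]
        ring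
      · simp only [Fin.zero_eta, Fin.mk_one, Fin.reduceFinMk, Fin.isValue, B3, Matrix.cons_val_zero, Matrix.cons_val_one, Matrix.head_cons,
          Matrix.cons_val_two, Matrix.tail_cons]
        rw [pd_form3 _ _ _ hx' (diffat h32 hzg) 0, pd_form3 _ _ _ hx' (diffat h32 hzg) 1,
          pd_form3 _ _ _ hx' (diffat h32 hzg) 2]
        simp only [Matrix.cons_val_zero, Matrix.cons_val_one, Matrix.head_cons,
          Matrix.cons_val_two, Matrix.tail_cons]
        ring
    · intro i j hij x hx
      have hzg := zmem hx
      obtain ⟨h01, h12'⟩ := hx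
      have hx' : x ∈ U3 := ⟨h01, h12'⟩
      have hs : (0:ℝ) < x 1 - x 0 := by linarith
      have ht : (0:ℝ) < x 2 - x 0 := by linarith
      have hr : (0:ℝ) < x 2 - x 1 := by linarith
      rw [Fin.sum_univ_three]
      fin_cases i <;> fin_cases j <;>
        first
          | exact absurd rfl hij
          | skip
      · simp only [Fin.zero_eta, Fin.mk_one, Fin.reduceFinMk, Fin.isValue, B3, Matrix.cons_val_zero, Matrix.cons_val_one, Matrix.head_cons,
          Matrix.cons_val_two, Matrix.tail_cons]
        rw [pd_form1 _ _ _ hx' (diffat h12 hzg) 0, pd_form1 _ _ _ hx' (diffat h12 hzg) 1,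
          pd_form1 _ _ _ hx' (diffat h12 hzg) 2]
        simp only [Matrix.cons_val_zero, Matrix.cons_val_one, Matrix.head_cons,
          Matrix.cons_val_two, Matrix.tail_cons]
        field_simp
        ring
      · simp only [Fin.zero_eta, Fin.mk_one, Fin.reduceFinMk, Fin.isValue, B3, Matrix.cons_val_zero, Matrix.cons_val_one, Matrix.head_cons,
          Matrix.cons_val_two, Matrix.tail_cons]
        rw [pd_form2 _ _ _ hx' (diffat h13 hzg) 0, pd_form2 _ _ _ hx' (diffat h13 hzg) 1,
          pd_form2 _ _ _ hx' (diffat h13 hzg) 2]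
        simp only [Matrix.cons_val_zero, Matrix.cons_val_one, Matrix.head_cons,
          Matrix.cons_val_two, Matrix.tail_cons]
        field_simp
        ring
      · simp only [Fin.zero_eta, Fin.mk_one, Fin.reduceFinMk, Fin.isValue, B3, Matrix.cons_val_zero, Matrix.cons_val_one, Matrix.head_cons,
          Matrix.cons_val_two, Matrix.tail_cons]
        rw [pd_form1 _ _ _ hx' (diffat h21 hzg) 0, pd_form1 _ _ _ hx' (diffat h21 hzg) 1,
          pd_form1 _ _ _ hx' (diffat h21 hzg) 2]
        simp only [Matrix.cons_val_zero, Matrix.cons_val_one, Matrix.head_cons,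
          Matrix.cons_val_two, Matrix.tail_cons]
        field_simp
        ring
      · simp only [Fin.zero_eta, Fin.mk_one, Fin.reduceFinMk, Fin.isValue, B3, Matrix.cons_val_zero, Matrix.cons_val_one, Matrix.head_cons,
          Matrix.cons_val_two, Matrix.tail_cons]
        rw [pd_form3 _ _ _ hx' (diffat h23 hzg) 0, pd_form3 _ _ _ hx' (diffat h23 hzg) 1,
          pd_form3 _ _ _ hx' (diffat h23 hzg) 2]
        simp only [Matrix.cons_val_zero, Matrix.cons_val_one, Matrix.head_cons,
          Matrix.cons_val_two, Matrix.tail_cons]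
        field_simp
        ring
      · simp only [Fin.zero_eta, Fin.mk_one, Fin.reduceFinMk, Fin.isValue, B3, Matrix.cons_val_zero, Matrix.cons_val_one, Matrix.head_cons,
          Matrix.cons_val_two, Matrix.tail_cons]
        rw [pd_form2 _ _ _ hx' (diffat h31 hzg) 0, pd_form2 _ _ _ hx' (diffat h31 hzg) 1,
          pd_form2 _ _ _ hx' (diffat h31 hzg) 2]
        simp only [Matrix.cons_val_zero, Matrix.cons_val_one, Matrix.head_cons,
          Matrix.cons_val_two, Matrix.tail_cons]
        field_simp
        ring
      · simp only [Fin.zero_eta, Fin.mk_one, Fin.reduceFinMk, Fin.isValue, B3, Matrix.cons_val_zero, Matrix.cons_val_one, Matrix.head_cons,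
          Matrix.cons_val_two, Matrix.tail_cons]
        rw [pd_form3 _ _ _ hx' (diffat h32 hzg) 0, pd_form3 _ _ _ hx' (diffat h32 hzg) 1,
          pd_form3 _ _ _ hx' (diffat h32 hzg) 2]
        simp only [Matrix.cons_val_zero, Matrix.cons_val_one, Matrix.head_cons,
          Matrix.cons_val_two, Matrix.tail_cons]
        field_simp
        ring
end

section
/- Fix d₁, d₂, d₃ ∈ ℝ, set d_ij := d_i − d_j, and let I ⊆ ℝ ∖ {0,1} be an interval. If F₁₂, F₂₁, F₁₃, F₃₁, F₂₃, F₃₂ : I → ℝ are differentiable and satisfy the system F₁₂' = F₁₃F₃₂/(z(z−1)); F₁₃' = −F₁₂F₂₃/(z−1) + d₁₃F₁₃/z; F₂₁' = F₂₃F₃₁/(z(z−1)); F₂₃' = F₂₁F₁₃/z + d₂₃F₂₃/(z−1); F₃₁' = −F₃₂F₂₁/(z−1) − d₁₃F₃₁/z; F₃₂' = F₃₁F₁₂/z − d₂₃F₃₂/(z−1), then the function F₂₃F₃₁F₁₂ − F₁₃F₃₂F₂₁ + d₂₃ F₁₃F₃₁ + d₁₃ F₂₃F₃₂ has zero derivative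 on I, hence is constant. -/
/-!
Write `T = F₁₂F₂₃F₃₁ + F₁₃F₃₂F₂₁`. Along the system the quartic terms of the derivative of the
cubic part `F₂₃F₃₁F₁₂ − F₁₃F₃₂F₂₁` cancel pairwise, leaving `(d₂₃/(z−1) − d₁₃/z) T`, while the
`d₁₃d₂₃` terms cancel inside each quadratic product, so that `(F₁₃F₃₁)' = −T/(z−1)` and
`(F₂₃F₃₂)' = T/z`. Hence the derivative of the whole expression vanishes, and a function with
zero derivative on a convex set is constant there by the mean value inequality.
-/

theorem Convex.is_const_of_hasDerivAt_zero {𝕜 G : Type*} [RCLike 𝕜] [NormedAddCommGroup G]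
    [NormedSpace 𝕜 G] {f : 𝕜 → G} {s : Set 𝕜} (hs : Convex ℝ s)
    (hf : ∀ x ∈ s, HasDerivAt f 0 x) {x y : 𝕜} (hx : x ∈ s) (hy : y ∈ s) : f x = f y := by
  have h := hs.norm_image_sub_le_of_norm_hasDerivWithin_le (C := 0)
    (fun t ht => (hf t ht).hasDerivWithinAt) (fun _ _ => norm_zero.le) hy hx
  rw [zero_mul, norm_le_zero_iff, sub_eq_zero] at h
  exact h

section DarbouxEgorovCubic

variable {F12 F21 F13 F31 F23 F32 : ℝ → ℝ} {d13 d23 z : ℝ}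

theorem hasDerivAt_F23F31F12_sub_F13F32F21
    (h12 : HasDerivAt F12 (F13 z * F32 z / (z * (z - 1))) z)
    (h13 : HasDerivAt F13 (-(F12 z * F23 z) / (z - 1) + d13 * F13 z / z) z)
    (h21 : HasDerivAt F21 (F23 z * F31 z / (z * (z - 1))) z)
    (h23 : HasDerivAt F23 (F21 z * F13 z / z + d23 * F23 z / (z - 1)) z)
    (h31 : HasDerivAt F31 (-(F32 z * F21 z) / (z - 1) - d13 * F31 z / z) z)
    (h32 : HasDerivAt F32 (F31 z * F12 z / z - d23 * F32 z / (z - 1)) z) :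
    HasDerivAt (fun t => F23 t * F31 t * F12 t - F13 t * F32 t * F21 t)
      ((d23 / (z - 1) - d13 / z) * (F12 z * F23 z * F31 z + F13 z * F32 z * F21 z)) z :=
  (((h23.mul h31).mul h12).sub ((h13.mul h32).mul h21)).congr_deriv
    (by simp only [Pi.mul_apply]; ring)

theorem hasDerivAt_F13F31
    (h13 : HasDerivAt F13 (-(F12 z * F23 z) / (z - 1) + d13 * F13 z / z) z)
    (h31 : HasDerivAt F31 (-(F32 z * F21 z) / (z - 1) - d13 * F31 z / z) z) :
    HasDerivAt (fun t => F13 t * F31 t)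
      (-(F12 z * F23 z * F31 z + F13 z * F32 z * F21 z) / (z - 1)) z :=
  (h13.mul h31).congr_deriv (by ring)

theorem hasDerivAt_F23F32
    (h23 : HasDerivAt F23 (F21 z * F13 z / z + d23 * F23 z / (z - 1)) z)
    (h32 : HasDerivAt F32 (F31 z * F12 z / z - d23 * F32 z / (z - 1)) z) :
    HasDerivAt (fun t => F23 t * F32 t)
      ((F12 z * F23 z * F31 z + F13 z * F32 z * F21 z) / z) z :=
  (h23.mul h32).congr_deriv (by ring)

theorem hasDerivAt_firstIntegral_zero
    (h12 : HasDerivAt F12 (F13 z * F32 z / (z * (z - 1))) z)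
    (h13 : HasDerivAt F13 (-(F12 z * F23 z) / (z - 1) + d13 * F13 z / z) z)
    (h21 : HasDerivAt F21 (F23 z * F31 z / (z * (z - 1))) z)
    (h23 : HasDerivAt F23 (F21 z * F13 z / z + d23 * F23 z / (z - 1)) z)
    (h31 : HasDerivAt F31 (-(F32 z * F21 z) / (z - 1) - d13 * F31 z / z) z)
    (h32 : HasDerivAt F32 (F31 z * F12 z / z - d23 * F32 z / (z - 1)) z) :
    HasDerivAt
      (fun t => F23 t * F31 t * F12 t - F13 t * F32 t * F21 t
        + d23 * (F13 t * F31 t) + d13 * (F23 t * F32 t)) 0 z :=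
  (((hasDerivAt_F23F31F12_sub_F13F32F21 h12 h13 h21 h23 h31 h32).add
      ((hasDerivAt_F13F31 h13 h31).const_mul d23)).add
      ((hasDerivAt_F23F32 h23 h32).const_mul d13)).congr_deriv (by ring)

end DarbouxEgorovCubic

theorem first_integral_cubic_general (d1 d2 d3 : ℝ) (I : Set ℝ)
    (hconv : Convex ℝ I)
    (F12 F21 F13 F31 F23 F32 : ℝ → ℝ)
    (h12 : ∀ z ∈ I, HasDerivAt F12 (F13 z * F32 z / (z * (z - 1))) z)
    (h13 : ∀ z ∈ I, HasDerivAt F13 (-(F12 z * F23 z) / (z - 1) + (d1 - d3) * F13 z / z) z)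
    (h21 : ∀ z ∈ I, HasDerivAt F21 (F23 z * F31 z / (z * (z - 1))) z)
    (h23 : ∀ z ∈ I, HasDerivAt F23 (F21 z * F13 z / z + (d2 - d3) * F23 z / (z - 1)) z)
    (h31 : ∀ z ∈ I, HasDerivAt F31 (-(F32 z * F21 z) / (z - 1) - (d1 - d3) * F31 z / z) z)
    (h32 : ∀ z ∈ I, HasDerivAt F32 (F31 z * F12 z / z - (d2 - d3) * F32 z / (z - 1)) z) :
    (∀ z ∈ I, HasDerivAt
      (fun t => F23 t * F31 t * F12 t - F13 t * F32 t * F21 t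
        + (d2 - d3) * (F13 t * F31 t) + (d1 - d3) * (F23 t * F32 t)) 0 z) ∧
    (∀ z ∈ I, ∀ w ∈ I,
      F23 z * F31 z * F12 z - F13 z * F32 z * F21 z
          + (d2 - d3) * (F13 z * F31 z) + (d1 - d3) * (F23 z * F32 z)
        = F23 w * F31 w * F12 w - F13 w * F32 w * F21 w
          + (d2 - d3) * (F13 w * F31 w) + (d1 - d3) * (F23 w * F32 w)) := by
  have hzero : ∀ z ∈ I, HasDerivAt
      (fun t => F23 t * F31 t * F12 t - F13 t * F32 t * F21 t
        + (d2 - d3) * (F13 t * F31 t) + (d1 - d3) * (F23 t * F32 t)) 0 z := fun z hz =>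
    hasDerivAt_firstIntegral_zero (h12 z hz) (h13 z hz) (h21 z hz) (h23 z hz) (h31 z hz)
      (h32 z hz)
  exact ⟨hzero, fun z hz w hw => hconv.is_const_of_hasDerivAt_zero hzero hz hw⟩

theorem first_integral_cubic (d1 d2 d3 : ℝ) (I : Set ℝ)
    (hI : ∀ z ∈ I, z ≠ 0 ∧ z ≠ 1) (hconv : Convex ℝ I)
    (F12 F21 F13 F31 F23 F32 : ℝ → ℝ)
    (h12 : ∀ z ∈ I, HasDerivAt F12 (F13 z * F32 z / (z * (z - 1))) z)
    (h13 : ∀ z ∈ I, HasDerivAt F13 (-(F12 z * F23 z) / (z - 1) + (d1 - d3) * F13 z / z) z)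
    (h21 : ∀ z ∈ I, HasDerivAt F21 (F23 z * F31 z / (z * (z - 1))) z)
    (h23 : ∀ z ∈ I, HasDerivAt F23 (F21 z * F13 z / z + (d2 - d3) * F23 z / (z - 1)) z)
    (h31 : ∀ z ∈ I, HasDerivAt F31 (-(F32 z * F21 z) / (z - 1) - (d1 - d3) * F31 z / z) z)
    (h32 : ∀ z ∈ I, HasDerivAt F32 (F31 z * F12 z / z - (d2 - d3) * F32 z / (z - 1)) z) :
    (∀ z ∈ I, HasDerivAt
      (fun t => F23 t * F31 t * F12 t - F13 t * F32 t * F21 t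
        + (d2 - d3) * (F13 t * F31 t) + (d1 - d3) * (F23 t * F32 t)) 0 z) ∧
    (∀ z ∈ I, ∀ w ∈ I,
      F23 z * F31 z * F12 z - F13 z * F32 z * F21 z
          + (d2 - d3) * (F13 z * F31 z) + (d1 - d3) * (F23 z * F32 z)
        = F23 w * F31 w * F12 w - F13 w * F32 w * F21 w
          + (d2 - d3) * (F13 w * F31 w) + (d1 - d3) * (F23 w * F32 w)) :=
  first_integral_cubic_general d1 d2 d3 I hconv F12 F21 F13 F31 F23 F32 h12 h13 h21 h23 h31 h32
end

section
/- Fix d₁, d₂, d₃ ∈ ℝ, set d_ij := d_i − d_j, and let I ⊆ ℝ ∖ {0,1} be an interval. Let F₁₂, F₂₁, F₁₃, F₃₁, F₂₃, F₃₂ : I → ℝ be differentiable solutions of the system F₁₂' = F₁₃F₃₂/(z(z−1)); F₁₃' = −F₁₂F₂₃/(z−1) + d₁₃F₁₃/z; F₂₁' = F₂₃F₃₁/(z(z−1)); F₂₃' = F₂₁F₁₃/z + d₂₃F₂₃/(z−1); F₃₁' = −F₃₂F₂₁/(z−1) − d₁₃F₃₁/z; F₃₂' = F₃₁F₁₂/z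 − d₂₃F₃₂/(z−1). Let R², D be the constants with F₁₂F₂₁ + F₁₃F₃₁ + F₂₃F₃₂ = −R² and F₂₃F₃₁F₁₂ − F₁₃F₃₂F₂₁ + d₂₃F₁₃F₃₁ + d₁₃F₂₃F₃₂ = D on I. Then there exists a twice-differentiable function f : I → ℝ such that f' = F₁₂F₂₁, F₁₃F₃₁ = f − z f' − R²/2 and F₂₃F₃₂ = −f + (z−1) f' − R²/2 on I; moreover any such f satisfies the second-order ODE [z(z−1) f'']² = 4 f' g₁ g₂ + (D − d₂₃ g₁ − d₁₃ g₂)², where g₁ := f − z f' − R²/2 and g₂ := −f + (z−1) f' − R²/2. -/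
/-!
By the system, `(F₁₃F₃₁)' = -z (F₁₂F₂₁)'`, so `f := F₁₃F₃₁ + z F₁₂F₂₁ + R²/2` has
`f' = F₁₂F₂₁`, and the quadratic integral gives the formula for `F₂₃F₃₂`. For the second-order
equation write `P = F₂₃F₃₁F₁₂` and `Q = F₁₃F₃₂F₂₁`: the system gives `z(z-1) f'' = P + Q`,
the cubic integral gives `P - Q = D - d₂₃g₁ - d₁₃g₂`, and `PQ = f' g₁ g₂`, so
`(P + Q)² = 4PQ + (P - Q)²` is the claimed equation.
-/

namespace DarbouxEgorov

variable {d13 z : ℝ} {F12 F21 F13 F31 F23 F32 : ℝ → ℝ}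

theorem hasDerivAt_potential (hz0 : z ≠ 0) (hz1 : z ≠ 1)
    (h12 : HasDerivAt F12 (F13 z * F32 z / (z * (z - 1))) z)
    (h13 : HasDerivAt F13 (-(F12 z * F23 z) / (z - 1) + d13 * F13 z / z) z)
    (h21 : HasDerivAt F21 (F23 z * F31 z / (z * (z - 1))) z)
    (h31 : HasDerivAt F31 (-(F32 z * F21 z) / (z - 1) - d13 * F31 z / z) z) :
    HasDerivAt (fun t => F13 t * F31 t + t * (F12 t * F21 t)) (F12 z * F21 z) z := by
  have hz1' : z - 1 ≠ 0 := sub_ne_zero.mpr hz1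
  refine ((h13.mul h31).add ((hasDerivAt_id' z).mul (h12.mul h21))).congr_deriv ?_
  simp only [Pi.mul_apply]
  field_simp
  ring

theorem mul_sub_one_mul_eq_of_hasDerivAt (hz0 : z ≠ 0) (hz1 : z ≠ 1) {f'' : ℝ}
    (h12 : HasDerivAt F12 (F13 z * F32 z / (z * (z - 1))) z)
    (h21 : HasDerivAt F21 (F23 z * F31 z / (z * (z - 1))) z)
    (hf'' : HasDerivAt (fun t => F12 t * F21 t) f'' z) :
    z * (z - 1) * f'' = F23 z * F31 z * F12 z + F13 z * F32 z * F21 z := by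
  have hz1' : z - 1 ≠ 0 := sub_ne_zero.mpr hz1
  rw [hf''.unique (h12.mul h21)]
  field_simp
  ring

end DarbouxEgorov

theorem exists_f_and_sigma_PVI_equation_general (d1 d2 d3 R2 D : ℝ) (I : Set ℝ)
    (hI : ∀ z ∈ I, z ≠ 0 ∧ z ≠ 1)
    (F12 F21 F13 F31 F23 F32 : ℝ → ℝ)
    (h12 : ∀ z ∈ I, HasDerivAt F12 (F13 z * F32 z / (z * (z - 1))) z)
    (h13 : ∀ z ∈ I, HasDerivAt F13 (-(F12 z * F23 z) / (z - 1) + (d1 - d3) * F13 z / z) z)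
    (h21 : ∀ z ∈ I, HasDerivAt F21 (F23 z * F31 z / (z * (z - 1))) z)
    (h31 : ∀ z ∈ I, HasDerivAt F31 (-(F32 z * F21 z) / (z - 1) - (d1 - d3) * F31 z / z) z)
    -- the values of the two first integrals
    (hR : ∀ z ∈ I, F12 z * F21 z + F13 z * F31 z + F23 z * F32 z = -R2)
    (hD : ∀ z ∈ I, F23 z * F31 z * F12 z - F13 z * F32 z * F21 z
        + (d2 - d3) * (F13 z * F31 z) + (d1 - d3) * (F23 z * F32 z) = D) :
    -- existence of a twice differentiable `f` with `f' = F₁₂F₂₁`,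
    -- `F₁₃F₃₁ = f - z f' - R²/2` and `F₂₃F₃₂ = -f + (z-1) f' - R²/2`
    (∃ f : ℝ → ℝ,
      (∀ z ∈ I, HasDerivAt f (F12 z * F21 z) z) ∧
      (∀ z ∈ I, F13 z * F31 z = f z - z * (F12 z * F21 z) - R2 / 2) ∧
      (∀ z ∈ I, F23 z * F32 z = -f z + (z - 1) * (F12 z * F21 z) - R2 / 2)) ∧
    -- moreover any such `f` satisfies `[z(z-1)f'']² = 4 f' g₁ g₂ + (D - d₂₃g₁ - d₁₃g₂)²`
    (∀ f f'' : ℝ → ℝ,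
      (∀ z ∈ I, HasDerivAt f (F12 z * F21 z) z) →
      (∀ z ∈ I, F13 z * F31 z = f z - z * (F12 z * F21 z) - R2 / 2) →
      (∀ z ∈ I, F23 z * F32 z = -f z + (z - 1) * (F12 z * F21 z) - R2 / 2) →
      (∀ z ∈ I, HasDerivAt (fun t => F12 t * F21 t) (f'' z) z) →
      ∀ z ∈ I,
        (z * (z - 1) * f'' z) ^ 2
          = 4 * (F12 z * F21 z) * (f z - z * (F12 z * F21 z) - R2 / 2)
              * (-f z + (z - 1) * (F12 z * F21 z) - R2 / 2)
            + (D - (d2 - d3) * (f z - z * (F12 z * F21 z) - R2 / 2)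
                 - (d1 - d3) * (-f z + (z - 1) * (F12 z * F21 z) - R2 / 2)) ^ 2) := by
  refine ⟨⟨fun z => F13 z * F31 z + z * (F12 z * F21 z) + R2 / 2, fun z hz => ?_,
    fun z _ => by ring, fun z hz => by linarith [hR z hz]⟩, ?_⟩
  · exact (DarbouxEgorov.hasDerivAt_potential (hI z hz).1 (hI z hz).2 (h12 z hz) (h13 z hz)
      (h21 z hz) (h31 z hz)).add_const _
  · intro f f'' _ hg1 hg2 hf'' z hz
    rw [← hg1 z hz, ← hg2 z hz, ← hD z hz,
      DarbouxEgorov.mul_sub_one_mul_eq_of_hasDerivAt (hI z hz).1 (hI z hz).2 (h12 z hz) (h21 z hz)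
        (hf'' z hz)]
    ring

theorem exists_f_and_sigma_PVI_equation (d1 d2 d3 R2 D : ℝ) (I : Set ℝ)
    (hI : ∀ z ∈ I, z ≠ 0 ∧ z ≠ 1) (hconv : Convex ℝ I)
    (F12 F21 F13 F31 F23 F32 : ℝ → ℝ)
    (h12 : ∀ z ∈ I, HasDerivAt F12 (F13 z * F32 z / (z * (z - 1))) z)
    (h13 : ∀ z ∈ I, HasDerivAt F13 (-(F12 z * F23 z) / (z - 1) + (d1 - d3) * F13 z / z) z)
    (h21 : ∀ z ∈ I, HasDerivAt F21 (F23 z * F31 z / (z * (z - 1))) z)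
    (h23 : ∀ z ∈ I, HasDerivAt F23 (F21 z * F13 z / z + (d2 - d3) * F23 z / (z - 1)) z)
    (h31 : ∀ z ∈ I, HasDerivAt F31 (-(F32 z * F21 z) / (z - 1) - (d1 - d3) * F31 z / z) z)
    (h32 : ∀ z ∈ I, HasDerivAt F32 (F31 z * F12 z / z - (d2 - d3) * F32 z / (z - 1)) z)
    -- the values of the two first integrals
    (hR : ∀ z ∈ I, F12 z * F21 z + F13 z * F31 z + F23 z * F32 z = -R2)
    (hD : ∀ z ∈ I, F23 z * F31 z * F12 z - F13 z * F32 z * F21 z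
        + (d2 - d3) * (F13 z * F31 z) + (d1 - d3) * (F23 z * F32 z) = D) :
    -- existence of a twice differentiable `f` with `f' = F₁₂F₂₁`,
    -- `F₁₃F₃₁ = f - z f' - R²/2` and `F₂₃F₃₂ = -f + (z-1) f' - R²/2`
    (∃ f : ℝ → ℝ,
      (∀ z ∈ I, HasDerivAt f (F12 z * F21 z) z) ∧
      (∀ z ∈ I, F13 z * F31 z = f z - z * (F12 z * F21 z) - R2 / 2) ∧
      (∀ z ∈ I, F23 z * F32 z = -f z + (z - 1) * (F12 z * F21 z) - R2 / 2)) ∧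
    -- moreover any such `f` satisfies `[z(z-1)f'']² = 4 f' g₁ g₂ + (D - d₂₃g₁ - d₁₃g₂)²`
    (∀ f f'' : ℝ → ℝ,
      (∀ z ∈ I, HasDerivAt f (F12 z * F21 z) z) →
      (∀ z ∈ I, F13 z * F31 z = f z - z * (F12 z * F21 z) - R2 / 2) →
      (∀ z ∈ I, F23 z * F32 z = -f z + (z - 1) * (F12 z * F21 z) - R2 / 2) →
      (∀ z ∈ I, HasDerivAt (fun t => F12 t * F21 t) (f'' z) z) →
      ∀ z ∈ I,
        (z * (z - 1) * f'' z) ^ 2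
          = 4 * (F12 z * F21 z) * (f z - z * (F12 z * F21 z) - R2 / 2)
              * (-f z + (z - 1) * (F12 z * F21 z) - R2 / 2)
            + (D - (d2 - d3) * (f z - z * (F12 z * F21 z) - R2 / 2)
                 - (d1 - d3) * (-f z + (z - 1) * (F12 z * F21 z) - R2 / 2)) ^ 2) :=
  exists_f_and_sigma_PVI_equation_general d1 d2 d3 R2 D I hI F12 F21 F13 F31 F23 F32 h12 h13 h21 h31
    hR hD
end

section
/- Fix real constants d₁, d₂, d₃, R², D, set d_ij := d_i − d_j, and let I ⊆ ℝ ∖ {0,1} be an interval. Suppose f : I → ℝ is twice differentiable and satisfies [z(z−1) f'']² = 4 f' g₁ g₂ + (D − d₂₃ g₁ − d₁₃ g₂)² on I, where g₁ := f − z f' − R²/2 and g₂ := −f + (z−1) f' − R²/2. Define φ(z) := f(z) − (d₂₁²/4) z + d₂₁ d₂₃/4. Then φ satisfies on I the sigma form of Painlevé VI: z²(z−1)²(φ'')² + 4[φ'(zφ'−φ)² − (φ')²(zφ'−φ)] = A(φ')² + B(zφ'−φ) + Cφ' + G, where A = 2R² + d₁₃² + d₂₁d₂₃; B = 2Dd₂₁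 + (d₁₃d₂₁ + d₂₃d₂₁)R² + d₂₁⁴/4 + d₂₁³d₁₃/2; C = R⁴ + 2Dd₁₃ + (d₂₁² + d₁₃² + d₂₃d₁₃)R² − d₂₁²d₂₃²/4 + d₂₁²d₁₃d₂₃/2 + d₂₁³d₂₃/2 + d₂₁²d₁₃²/2; and G = D² + DR²(d₁₃+d₂₃) + (R⁴/4)[d₂₁² + (d₁₃+d₂₃)²] + (D/2)d₂₁²(d₁₃+d₂₃) + (R²/8)d₂₁²[d₂₁² + 4d₁₃d₂₃ + 2d₁₃² + 2d₂₃²] + (d₂₁⁴/16)[d₂₃d₂₁ + d₁₃² + 2d₁₃d₂₃]. -/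
theorem sigma_form_of_PainleveVI (d1 d2 d3 R2 D : ℝ) (I : Set ℝ)
    (hI : ∀ z ∈ I, z ≠ 0 ∧ z ≠ 1) (hconv : Convex ℝ I)
    (f f' f'' : ℝ → ℝ)
    (hf : ∀ z ∈ I, HasDerivAt f (f' z) z)
    (hf' : ∀ z ∈ I, HasDerivAt f' (f'' z) z)
    -- equation (painlevevi2):  [z(z-1)f'']² = 4 f' g₁ g₂ + (D - d₂₃ g₁ - d₁₃ g₂)²
    (hODE : ∀ z ∈ I,
      (z * (z - 1) * f'' z) ^ 2
        = 4 * f' z * (f z - z * f' z - R2 / 2) * (-f z + (z - 1) * f' z - R2 / 2)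
          + (D - (d2 - d3) * (f z - z * f' z - R2 / 2)
               - (d1 - d3) * (-f z + (z - 1) * f' z - R2 / 2)) ^ 2)
    -- φ(z) = f(z) - (d₂₁²/4) z + d₂₁ d₂₃ / 4, together with its first and
    -- second derivatives φ' = f' - d₂₁²/4 and φ'' = f''
    (φ φ' : ℝ → ℝ)
    (hφ : ∀ z, φ z = f z - ((d2 - d1) ^ 2 / 4) * z + (d2 - d1) * (d2 - d3) / 4)
    (hφ' : ∀ z, φ' z = f' z - (d2 - d1) ^ 2 / 4)
    (A B C G : ℝ)
    (hA : A = 2 * R2 + (d1 - d3) ^ 2 + (d2 - d1) * (d2 - d3))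
    (hB : B = 2 * D * (d2 - d1) + ((d1 - d3) * (d2 - d1) + (d2 - d3) * (d2 - d1)) * R2
        + (d2 - d1) ^ 4 / 4 + (d2 - d1) ^ 3 * (d1 - d3) / 2)
    (hC : C = R2 ^ 2 + 2 * D * (d1 - d3)
        + ((d2 - d1) ^ 2 + (d1 - d3) ^ 2 + (d2 - d3) * (d1 - d3)) * R2
        - (d2 - d1) ^ 2 * (d2 - d3) ^ 2 / 4 + (d2 - d1) ^ 2 * (d1 - d3) * (d2 - d3) / 2
        + (d2 - d1) ^ 3 * (d2 - d3) / 2 + (d2 - d1) ^ 2 * (d1 - d3) ^ 2 / 2)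
    (hG : G = D ^ 2 + D * R2 * ((d1 - d3) + (d2 - d3))
        + (R2 ^ 2 / 4) * ((d2 - d1) ^ 2 + ((d1 - d3) + (d2 - d3)) ^ 2)
        + (D / 2) * (d2 - d1) ^ 2 * ((d1 - d3) + (d2 - d3))
        + (R2 / 8) * (d2 - d1) ^ 2 * ((d2 - d1) ^ 2 + 4 * (d1 - d3) * (d2 - d3)
            + 2 * (d1 - d3) ^ 2 + 2 * (d2 - d3) ^ 2)
        + ((d2 - d1) ^ 4 / 16) * ((d2 - d3) * (d2 - d1) + (d1 - d3) ^ 2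
            + 2 * (d1 - d3) * (d2 - d3))) :
    ∀ z ∈ I,
      z ^ 2 * (z - 1) ^ 2 * (f'' z) ^ 2
        + 4 * (φ' z * (z * φ' z - φ z) ^ 2 - (φ' z) ^ 2 * (z * φ' z - φ z))
      = A * (φ' z) ^ 2 + B * (z * φ' z - φ z) + C * φ' z + G := by
  intro z hz
  have h := hODE z hz
  subst hA hB hC hG
  rw [hφ z, hφ' z]
  linear_combination h
end

section
/- Let n ≥ 2, d₁,…,d_n ∈ ℝ, and let U ⊆ ℝⁿ be an open set all of whose points have pairwise distinct coordinates. Let β_ij (i ≠ j) be smooth functions on U satisfying (ED1) ∂_k β_ij = β_ik β_kj for pairwise distinct i,j,k, (ED2) e(β_ij) = 0 and (ED3) E(β_ij) = (d_i − d_j − 1)β_ij, and set β_ii := 0. Define n×n matrix-valued functions V and W_{(k)} (k = 1,…,n) on U by V_ij = (u^j − u^i)β_ij − (d_j − d₁)δ_ij and (W_{(k)})_{ij} = δ_{ik} β_kj − β_ik δ_{kj}. Then the system is in Lax form: ∂_k V = V W_{(k)} − W_{(k)} V for every k = 1,…,n. -/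
/-- The Lax matrix `V_ij = (u^j - u^i) β_ij - (d_j - d₁) δ_ij`. -/
noncomputable def Vmat {n : ℕ} (d : Fin n → ℝ) (d1 : ℝ)
    (β : Fin n → Fin n → (Fin n → ℝ) → ℝ) (x : Fin n → ℝ) :
    Matrix (Fin n) (Fin n) ℝ :=
  Matrix.of fun i j => (x j - x i) * β i j x - (d j - d1) * (if i = j then 1 else 0)

/-- The matrices `(W_{(k)})_ij = δ_ik β_kj - β_ik δ_kj`. -/
noncomputable def Wmat {n : ℕ} (β : Fin n → Fin n → (Fin n → ℝ) → ℝ) (k : Fin n)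
    (x : Fin n → ℝ) : Matrix (Fin n) (Fin n) ℝ :=
  Matrix.of fun i j => (if i = k then 1 else 0) * β k j x - β i k x * (if k = j then 1 else 0)

lemma pd_aux {n : ℕ} (i j k : Fin n) (f : (Fin n → ℝ) → ℝ) (c : ℝ) (x : Fin n → ℝ)
    (hf : DifferentiableAt ℝ f x) :
    pd k (fun y => (y j - y i) * f y - c) x
      = ((if j = k then (1:ℝ) else 0) - (if i = k then 1 else 0)) * f x
        + (x j - x i) * pd k f x := by
  have hj : HasFDerivAt (fun y : Fin n → ℝ => y j)
      (ContinuousLinearMap.proj j : (Fin n → ℝ) →L[ℝ] ℝ) x := hasFDerivAt_apply j x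
  have hi : HasFDerivAt (fun y : Fin n → ℝ => y i)
      (ContinuousLinearMap.proj i : (Fin n → ℝ) →L[ℝ] ℝ) x := hasFDerivAt_apply i x
  have h := ((hj.sub hi).mul hf.hasFDerivAt).sub_const c
  unfold pd
  rw [HasFDerivAt.fderiv (f := fun y : Fin n → ℝ => (y j - y i) * f y - c) h]
  simp [ContinuousLinearMap.proj_apply, Pi.single_apply, mul_comm]
  ring

lemma pd_const_of_eq {n : ℕ} (k : Fin n) (f : (Fin n → ℝ) → ℝ) (c : ℝ)
    (h : f = fun _ => c) (x : Fin n → ℝ) : pd k f x = 0 := by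
  rw [h]; unfold pd; rw [fderiv_fun_const]; simp

lemma sum_point {n : ℕ} (f : Fin n → ℝ) (j : Fin n) (c : ℝ)
    (h : ∀ l, f l = if l = j then c else 0) : ∑ l, f l = c := by
  rw [Finset.sum_congr rfl (fun l _ => h l), Finset.sum_ite_eq' Finset.univ j]; simp

lemma sum_split2_s9 {n : ℕ} (f t : Fin n → ℝ) (x : Fin n → ℝ) (a b : ℝ) (j : Fin n) (c : ℝ)
    (h : ∀ l, f l = a * t l + b * (x l * t l) + (if l = j then c else 0)) :
    ∑ l, f l = a * (∑ l, t l) + b * (∑ l, x l * t l) + c := by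
  rw [Finset.sum_congr rfl (fun l _ => h l), Finset.sum_add_distrib, Finset.sum_add_distrib,
    Finset.sum_ite_eq' Finset.univ j]
  simp [Finset.mul_sum]

theorem darboux_egorov_lax_form {n : ℕ} (hn : 2 ≤ n) (d : Fin n → ℝ)
    (U : Set (Fin n → ℝ)) (hU : IsOpen U)
    (hdist : ∀ x ∈ U, ∀ i j : Fin n, i ≠ j → x i ≠ x j)
    (β : Fin n → Fin n → (Fin n → ℝ) → ℝ)
    (hβ : ∀ i j : Fin n, i ≠ j → ContDiffOn ℝ (⊤ : ℕ∞) (β i j) U)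
    (hβdiag : ∀ i : Fin n, ∀ x ∈ U, β i i x = 0)
    (hED1 : ∀ i j k : Fin n, i ≠ j → j ≠ k → i ≠ k →
      ∀ x ∈ U, pd k (β i j) x = β i k x * β k j x)
    (hED2 : ∀ i j : Fin n, i ≠ j → ∀ x ∈ U, ∑ l, pd l (β i j) x = 0)
    (hED3 : ∀ i j : Fin n, i ≠ j → ∀ x ∈ U,
      ∑ l, x l * pd l (β i j) x = (d i - d j - 1) * β i j x) :
    ∀ k : Fin n, ∀ x ∈ U, ∀ i j : Fin n,
      pd k (fun y => Vmat d (d ⟨0, by omega⟩) β y i j) x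
        = (Vmat d (d ⟨0, by omega⟩) β x * Wmat β k x
            - Wmat β k x * Vmat d (d ⟨0, by omega⟩) β x) i j := by
  intro k x hx i j
  set d1 : ℝ := d ⟨0, by omega⟩ with hd1
  have hdiff : ∀ a b : Fin n, a ≠ b → DifferentiableAt ℝ (β a b) x := fun a b hab =>
    ((hβ a b hab).differentiableOn (by simp)).differentiableAt (hU.mem_nhds hx)
  have hV : ∀ a b, Vmat d d1 β x a b
      = (x b - x a) * β a b x - (d b - d1) * (if a = b then 1 else 0) := fun a b => rfl
  rw [Matrix.sub_apply, Matrix.mul_apply, Matrix.mul_apply]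
  by_cases hij : i = j
  · subst hij
    have hL : pd k (fun y => Vmat d d1 β y i i) x = 0 := by
      apply pd_const_of_eq k _ (-((d i - d1) * (if i = i then (1:ℝ) else 0)))
      funext y; show (y i - y i) * β i i y - _ = _; ring
    rw [hL, ← Finset.sum_sub_distrib]
    symm
    apply Finset.sum_eq_zero
    intro l _
    by_cases hli : l = i
    · subst hli; ring
    · by_cases hlk : l = k
      · by_cases hki : k = i
        · exact absurd (hlk.trans hki) hli
        · subst hlk
          simp only [hV, Wmat, Matrix.of_apply, if_neg hli, if_neg (Ne.symm hli),
            if_pos rfl, if_neg hki, if_neg (Ne.symm hki)]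
          ring
      · by_cases hki : k = i
        · subst hki
          simp only [hV, Wmat, Matrix.of_apply, if_neg hli, if_neg (Ne.symm hli),
            if_neg hlk, if_neg (Ne.symm hlk), if_pos rfl]
          ring
        · simp only [hV, Wmat, Matrix.of_apply, if_neg hli, if_neg (Ne.symm hli),
            if_neg hlk, if_neg (Ne.symm hlk), if_neg hki, if_neg (Ne.symm hki)]
          ring
  · -- i ≠ j
    have hL : pd k (fun y => Vmat d d1 β y i j) x
        = ((if j = k then (1:ℝ) else 0) - if i = k then 1 else 0) * β i j x
          + (x j - x i) * pd k (β i j) x :=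
      pd_aux i j k (β i j) ((d j - d1) * (if i = j then (1:ℝ) else 0)) x (hdiff i j hij)
    rw [hL]
    have hsum1 : pd i (β i j) x + pd j (β i j) x = -∑ l, β i l x * β l j x := by
      have h0 := hED2 i j hij x hx
      have hs : ∑ l, (pd l (β i j) x - β i l x * β l j x)
          = (pd i (β i j) x - β i i x * β i j x) + (pd j (β i j) x - β i j x * β j j x) := by
        apply Fintype.sum_eq_add i j hij
        intro l ⟨hli, hlj⟩
        rw [hED1 i j l hij (Ne.symm hlj) (Ne.symm hli) x hx]; ring
      rw [Finset.sum_sub_distrib, h0, hβdiag i x hx, hβdiag j x hx] at hs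
      linarith [hs]
    have hsum2 : x i * pd i (β i j) x + x j * pd j (β i j) x
        = (d i - d j - 1) * β i j x - ∑ l, x l * (β i l x * β l j x) := by
      have h0 := hED3 i j hij x hx
      have hs : ∑ l, (x l * pd l (β i j) x - x l * (β i l x * β l j x))
          = (x i * pd i (β i j) x - x i * (β i i x * β i j x))
            + (x j * pd j (β i j) x - x j * (β i j x * β j j x)) := by
        apply Fintype.sum_eq_add i j hij
        intro l ⟨hli, hlj⟩
        rw [hED1 i j l hij (Ne.symm hlj) (Ne.symm hli) x hx]; ring
      rw [Finset.sum_sub_distrib, h0, hβdiag i x hx, hβdiag j x hx] at hs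
      linarith [hs]
    by_cases hki : k = i
    · -- case B : k = i ≠ j
      subst hki
      have e1 : ∑ l, Vmat d d1 β x k l * Wmat β k x l j = Vmat d d1 β x k k * β k j x := by
        apply sum_point _ k
        intro l
        by_cases hlk : l = k
        · subst hlk; simp [Wmat, if_neg hij]
        · simp [Wmat, if_neg hlk, if_neg hij]
      have e2 : ∑ l, Wmat β k x k l * Vmat d d1 β x l j
          = x j * (∑ l, β k l x * β l j x) + (-1) * (∑ l, x l * (β k l x * β l j x))
            + (-((d j - d1) * β k j x)) := by
        refine sum_split2_s9 _ _ x (x j) (-1) j _ ?_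
        intro l
        by_cases hlj : l = j
        · subst hlj; simp [Wmat, hV, hβdiag k x hx, if_neg hij]; ring
        · simp [Wmat, hV, hβdiag k x hx, hlj, if_neg hlj]; ring
      rw [e1, e2]
      simp only [hV, eq_self_iff_true, if_true, if_neg (Ne.symm hij)]
      linear_combination x j * hsum1 - hsum2
    · by_cases hkj : k = j
      · -- case C : k = j ≠ i
        subst hkj
        have e1 : ∑ l, Vmat d d1 β x i l * Wmat β k x l k
            = x i * (∑ l, β i l x * β l k x) + (-1) * (∑ l, x l * (β i l x * β l k x))
              + ((d i - d1) * β i k x) := by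
          refine sum_split2_s9 _ _ x (x i) (-1) i _ ?_
          intro l
          by_cases hli : l = i
          · subst hli; simp [Wmat, hV, hβdiag k x hx, if_neg hij]; ring
          · simp [Wmat, hV, hβdiag k x hx, hli, if_neg hli, if_neg (Ne.symm hli)]; ring
        have e2 : ∑ l, Wmat β k x i l * Vmat d d1 β x l k = (d k - d1) * β i k x := by
          apply sum_point _ k
          intro l
          by_cases hlk : l = k
          · subst hlk; simp [Wmat, hV, if_neg hij]; ring
          · simp [Wmat, hV, hlk, if_neg hij, if_neg (fun h : k = l => hlk h.symm)]
        rw [e1, e2]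
        simp only [eq_self_iff_true, if_true, if_neg hij]
        linear_combination hsum2 - x i * hsum1
      · -- case A : k ∉ {i, j}
        have e1 : ∑ l, Vmat d d1 β x i l * Wmat β k x l j
            = Vmat d d1 β x i k * β k j x := by
          apply sum_point _ k
          intro l
          by_cases hlk : l = k
          · subst hlk; simp [Wmat, if_neg hkj]
          · simp [Wmat, if_neg hlk, if_neg hkj]
        have e2 : ∑ l, Wmat β k x i l * Vmat d d1 β x l j
            = -(β i k x * Vmat d d1 β x k j) := by
          apply sum_point _ k
          intro l
          by_cases hlk : l = k
          · subst hlk; simp [Wmat, if_neg (Ne.symm hki)]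
          · simp [Wmat, hlk, if_neg (Ne.symm hki), if_neg (fun h : k = l => hlk h.symm)]
        rw [e1, e2, hED1 i j k hij (Ne.symm hkj) (Ne.symm hki) x hx]
        simp only [hV, if_neg (Ne.symm hki), if_neg hkj, if_neg (Ne.symm hkj),
          if_neg (show ¬ i = k from Ne.symm hki)]
        ring
end

section
/- Let m ∈ ℝ and let β : U → ℝ be a smooth function on the open set U = {(u¹,u²) ∈ ℝ² : u¹ > u²} satisfying ∂₁β + ∂₂β = 0 and u¹∂₁β + u²∂₂β = m β on U. Then there exists a constant C ∈ ℝ such that β(u¹,u²) = C (u¹ − u²)^m for all (u¹,u²) ∈ U. -/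
theorem two_dim_homogeneous_translation_invariant (m : ℝ)
    (β : (Fin 2 → ℝ) → ℝ)
    (hβ : ContDiffOn ℝ (⊤ : ℕ∞) β {x : Fin 2 → ℝ | x 1 < x 0})
    (htrans : ∀ x ∈ {x : Fin 2 → ℝ | x 1 < x 0},
      pd 0 β x + pd 1 β x = 0)
    (hhom : ∀ x ∈ {x : Fin 2 → ℝ | x 1 < x 0},
      x 0 * pd 0 β x + x 1 * pd 1 β x = m * β x) :
    ∃ C : ℝ, ∀ x ∈ {x : Fin 2 → ℝ | x 1 < x 0},
      β x = C * (x 0 - x 1) ^ m := by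
  set U : Set (Fin 2 → ℝ) := {x : Fin 2 → ℝ | x 1 < x 0} with hU
  have hUopen : IsOpen U := isOpen_lt (continuous_apply 1) (continuous_apply 0)
  have hdiff : ∀ x ∈ U, DifferentiableAt ℝ β x := fun x hx =>
    ((hβ x hx).contDiffAt (hUopen.mem_nhds hx)).differentiableAt (by simp)
  -- the direction (1,1)
  set v : Fin 2 → ℝ := fun _ => 1 with hv
  have hvsingle : v = (Pi.single 0 1 : Fin 2 → ℝ) + Pi.single 1 1 := by
    funext i; fin_cases i <;> simp [hv]
  -- Step 1: translation invariance along v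
  have step1 : ∀ x ∈ U, β x = β ((x 0 - x 1) • (Pi.single 0 1 : Fin 2 → ℝ)) := by
    intro x hx
    set φ : ℝ → ℝ := fun t => β (x + t • v) with hφ
    have hmem : ∀ t : ℝ, x + t • v ∈ U := by
      intro t
      simp only [hU, Set.mem_setOf_eq] at hx ⊢
      simp only [Pi.add_apply, Pi.smul_apply, hv, smul_eq_mul, mul_one]
      linarith
    have hder : ∀ t : ℝ, HasDerivAt φ 0 t := by
      intro t
      have hL : HasDerivAt (fun t : ℝ => x + t • v) v t := by
        simpa using ((hasDerivAt_id t).smul_const v).const_add x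
      have hF := (hdiff _ (hmem t)).hasFDerivAt
      have := hF.comp_hasDerivAt t hL
      have hzero : ∀ y ∈ U, (fderiv ℝ β y) v = 0 := by
        intro y hy
        rw [hvsingle, map_add]
        exact htrans _ hy
      rwa [hzero _ (hmem t)] at this
    have hc : φ (-(x 1)) = φ 0 :=
      is_const_of_deriv_eq_zero (fun t => (hder t).differentiableAt)
        (fun t => (hder t).deriv) _ _
    have h0 : φ 0 = β x := by simp [hφ]
    have h1 : x + (-(x 1)) • v = (x 0 - x 1) • (Pi.single 0 1 : Fin 2 → ℝ) := by
      funext i; fin_cases i <;> simp [hv] <;> ring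
    rw [← h0, ← hc, hφ]; simp only []
    rw [h1]
  -- ψ s = β(s, 0)
  set ψ : ℝ → ℝ := fun s => β (s • (Pi.single 0 1 : Fin 2 → ℝ)) with hψ
  have hmemψ : ∀ s : ℝ, 0 < s → s • (Pi.single 0 1 : Fin 2 → ℝ) ∈ U := by
    intro s hs; simp [hU, hs]
  have hψder : ∀ s : ℝ, 0 < s → HasDerivAt ψ (m * ψ s / s) s := by
    intro s hs
    have hL : HasDerivAt (fun s : ℝ => s • (Pi.single 0 1 : Fin 2 → ℝ))
        ((Pi.single 0 1 : Fin 2 → ℝ)) s := by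
      simpa using (hasDerivAt_id s).smul_const ((Pi.single 0 1 : Fin 2 → ℝ))
    have hF := (hdiff _ (hmemψ s hs)).hasFDerivAt
    have hd := hF.comp_hasDerivAt s hL
    have heq : (fderiv ℝ β (s • (Pi.single 0 1 : Fin 2 → ℝ)))
        ((Pi.single 0 1 : Fin 2 → ℝ)) = m * ψ s / s := by
      have h := hhom _ (hmemψ s hs)
      have h0 : (s • (Pi.single 0 1 : Fin 2 → ℝ)) 0 = s := by simp
      have h1 : (s • (Pi.single 0 1 : Fin 2 → ℝ)) 1 = 0 := by simp
      rw [h0, h1] at h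
      simp only [zero_mul, add_zero] at h
      have : pd 0 β (s • (Pi.single 0 1 : Fin 2 → ℝ)) = m * ψ s / s := by
        field_simp
        linarith [h]
      simpa [pd] using this
    rwa [heq] at hd
  -- h s = ψ s * s^(-m) is constant on Ioi 0
  set h : ℝ → ℝ := fun s => ψ s * s ^ (-m) with hh
  have hhder : ∀ s : ℝ, 0 < s → HasDerivAt h 0 s := by
    intro s hs
    have hr : HasDerivAt (fun s : ℝ => s ^ (-m)) (-m * s ^ (-m - 1)) s :=
      Real.hasDerivAt_rpow_const (Or.inl hs.ne')
    have := (hψder s hs).mul hr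
    have hkey : m * ψ s / s * s ^ (-m) + ψ s * (-m * s ^ (-m - 1)) = 0 := by
      have hsplit : s ^ (-m) = s * s ^ (-m - 1) := by
        conv_lhs => rw [show (-m) = 1 + (-m - 1) by ring]
        rw [Real.rpow_add hs, Real.rpow_one]
      rw [hsplit]
      field_simp
      ring
    rwa [hkey] at this
  have hconst : ∀ s : ℝ, 0 < s → h s = h 1 := by
    intro s hs
    have hdo : DifferentiableOn ℝ h (Set.Ioi 0) := fun t ht =>
      (hhder t ht).differentiableAt.differentiableWithinAt
    refine (convex_Ioi (0:ℝ)).is_const_of_fderivWithin_eq_zero hdo ?_ hs (by norm_num)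
    intro t ht
    rw [fderivWithin_of_isOpen isOpen_Ioi ht]
    have := (hhder t ht).hasFDerivAt
    rw [this.fderiv]
    ext
    simp
  refine ⟨ψ 1, ?_⟩
  intro x hx
  have hs : 0 < x 0 - x 1 := by simp only [hU, Set.mem_setOf_eq] at hx; linarith
  have h1 : β x = ψ (x 0 - x 1) := step1 x hx
  have h2 := hconst (x 0 - x 1) hs
  simp only [hh, Real.one_rpow, mul_one] at h2
  have hne : (x 0 - x 1) ^ (-m) ≠ 0 := (Real.rpow_pos_of_pos hs _).ne'
  have : ψ (x 0 - x 1) = ψ 1 * (x 0 - x 1) ^ m := by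
    have hmul : (x 0 - x 1) ^ (-m) * (x 0 - x 1) ^ m = 1 := by
      rw [← Real.rpow_add hs]; simp
    calc ψ (x 0 - x 1) = ψ (x 0 - x 1) * ((x 0 - x 1) ^ (-m) * (x 0 - x 1) ^ m) := by
          rw [hmul, mul_one]
      _ = (ψ (x 0 - x 1) * (x 0 - x 1) ^ (-m)) * (x 0 - x 1) ^ m := by ring
      _ = ψ 1 * (x 0 - x 1) ^ m := by rw [h2]
  rw [h1, this]
end

section
/- Let C₁, C₂, d₁, d₂ ∈ ℝ and let U = {(u¹,u²) ∈ ℝ² : u¹ > u²}. Define β₁₂ = C₁(u¹−u²)^{d₁−d₂−1} and β₂₁ = C₂(u¹−u²)^{d₂−d₁−1} on U. Suppose there exist smooth functions H₁, H₂ on U, not both identically zero, satisfying ∂₁H_i + ∂₂H_i = 0 and u¹∂₁H_i + u²∂₂H_i = d_i H_i for i = 1,2, together with ∂₂H₁ = β₁₂ H₂ and ∂₁H₂ = β₂₁ H₁. Then d₁ d₂ = −C₁ C₂. -/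
lemma biflat_aux (C1 C2 d1 d2 A B h1v h2v : ℝ) (hA : 0 < A) (hB : 0 < B)
    (hAB : A * B = 1) (k1 : d1 * h1v = -(C1 * A * h2v)) (k2 : d2 * h2v = C2 * B * h1v)
    (hne : h1v ≠ 0 ∨ h2v ≠ 0) : d1 * d2 = -(C1 * C2) := by
  by_cases h1 : h1v = 0
  · have h2 : h2v ≠ 0 := hne.resolve_left (by simp [h1])
    have hd2 : d2 = 0 := by
      have : d2 * h2v = 0 := by rw [k2, h1]; ring
      exact (mul_eq_zero.mp this).resolve_right h2
    have hC1 : C1 = 0 := by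
      have : C1 * (A * h2v) = 0 := by
        have := k1; rw [h1] at this; linear_combination this
      exact (mul_eq_zero.mp this).resolve_right (mul_ne_zero hA.ne' h2)
    rw [hd2, hC1]; ring
  · by_cases h2 : h2v = 0
    · have hd1 : d1 = 0 := by
        have : d1 * h1v = 0 := by rw [k1, h2]; ring
        exact (mul_eq_zero.mp this).resolve_right h1
      have hC2 : C2 = 0 := by
        have : C2 * (B * h1v) = 0 := by
          have := k2; rw [h2] at this; linear_combination -this
        exact (mul_eq_zero.mp this).resolve_right (mul_ne_zero hB.ne' h1)
      rw [hd1, hC2]; ring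
    · apply mul_right_cancel₀ (mul_ne_zero h1 h2)
      calc d1 * d2 * (h1v * h2v) = (d1 * h1v) * (d2 * h2v) := by ring
        _ = (-(C1 * A * h2v)) * (C2 * B * h1v) := by rw [k1, k2]
        _ = -(C1 * C2) * (A * B) * (h1v * h2v) := by ring
        _ = -(C1 * C2) * (h1v * h2v) := by rw [hAB]; ring

theorem two_dim_biflat_constraint (C1 C2 d1 d2 : ℝ)
    (H1 H2 : (Fin 2 → ℝ) → ℝ)
    (hH1 : ContDiffOn ℝ (⊤ : ℕ∞) H1 {x : Fin 2 → ℝ | x 1 < x 0})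
    (hH2 : ContDiffOn ℝ (⊤ : ℕ∞) H2 {x : Fin 2 → ℝ | x 1 < x 0})
    (hnz : ¬((∀ x ∈ {x : Fin 2 → ℝ | x 1 < x 0}, H1 x = 0) ∧
             (∀ x ∈ {x : Fin 2 → ℝ | x 1 < x 0}, H2 x = 0)))
    (he1 : ∀ x ∈ {x : Fin 2 → ℝ | x 1 < x 0}, pd 0 H1 x + pd 1 H1 x = 0)
    (he2 : ∀ x ∈ {x : Fin 2 → ℝ | x 1 < x 0}, pd 0 H2 x + pd 1 H2 x = 0)
    (hE1 : ∀ x ∈ {x : Fin 2 → ℝ | x 1 < x 0},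
      x 0 * pd 0 H1 x + x 1 * pd 1 H1 x = d1 * H1 x)
    (hE2 : ∀ x ∈ {x : Fin 2 → ℝ | x 1 < x 0},
      x 0 * pd 0 H2 x + x 1 * pd 1 H2 x = d2 * H2 x)
    (hL12 : ∀ x ∈ {x : Fin 2 → ℝ | x 1 < x 0},
      pd 1 H1 x = C1 * (x 0 - x 1) ^ (d1 - d2 - 1) * H2 x)
    (hL21 : ∀ x ∈ {x : Fin 2 → ℝ | x 1 < x 0},
      pd 0 H2 x = C2 * (x 0 - x 1) ^ (d2 - d1 - 1) * H1 x) :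
    d1 * d2 = -(C1 * C2) := by
  -- find a point where H1 or H2 is nonzero
  rw [not_and_or] at hnz
  push_neg at hnz
  have hpt : ∃ x ∈ {x : Fin 2 → ℝ | x 1 < x 0}, H1 x ≠ 0 ∨ H2 x ≠ 0 := by
    rcases hnz with ⟨x, hx, h⟩ | ⟨x, hx, h⟩
    · exact ⟨x, hx, Or.inl h⟩
    · exact ⟨x, hx, Or.inr h⟩
  obtain ⟨x, hx, hne⟩ := hpt
  have hs : (0:ℝ) < x 0 - x 1 := sub_pos.mpr hx
  have h1 := he1 x hx
  have h2 := hE1 x hx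
  have h3 := he2 x hx
  have h4 := hE2 x hx
  have h5 := hL12 x hx
  have h6 := hL21 x hx
  have e1 : (x 0 - x 1) * pd 1 H1 x = -(d1 * H1 x) := by linear_combination x 0 * h1 - h2
  have e2 : (x 0 - x 1) * pd 0 H2 x = d2 * H2 x := by linear_combination h4 - x 1 * h3
  have hpow1 : (x 0 - x 1) * (x 0 - x 1) ^ (d1 - d2 - 1) = (x 0 - x 1) ^ (d1 - d2) := by
    rw [Real.rpow_sub hs, Real.rpow_one]
    field_simp
  have hpow2 : (x 0 - x 1) * (x 0 - x 1) ^ (d2 - d1 - 1) = (x 0 - x 1) ^ (d2 - d1) := by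
    rw [Real.rpow_sub hs, Real.rpow_one]
    field_simp
  have k1 : d1 * H1 x = -(C1 * (x 0 - x 1) ^ (d1 - d2) * H2 x) := by
    rw [h5] at e1
    linear_combination e1 - C1 * H2 x * hpow1
  have k2 : d2 * H2 x = C2 * (x 0 - x 1) ^ (d2 - d1) * H1 x := by
    rw [h6] at e2
    linear_combination -e2 + C2 * H1 x * hpow2
  have hAB : (x 0 - x 1) ^ (d1 - d2) * (x 0 - x 1) ^ (d2 - d1) = 1 := by
    rw [← Real.rpow_add hs]
    norm_num
  exact biflat_aux C1 C2 d1 d2 _ _ _ _ (Real.rpow_pos_of_pos hs _)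
    (Real.rpow_pos_of_pos hs _) hAB k1 k2 hne
end

section
/- Let n ≥ 2, let ε₁,…,ε_n ∈ ℝ, and let U ⊆ ℝⁿ be an open set all of whose points have pairwise distinct coordinates. Define on U the Lamé coefficients H_i = Π_{l≠i} |u^i − u^l|^{−ε_l} and the rotation coefficients β_ij = (H_i/H_j) · ε_j/(u^i − u^j) for i ≠ j, and set d_i := −Σ_{l≠i} ε_l. Then: (ED1) ∂_k β_ij = β_ik β_kj for pairwise distinct i,j,k; (ED2) e(β_ij) = 0; (ED3) E(β_ij) = (d_i − d_j − 1)β_ij; (L1) ∂_j H_i = β_ij H_j for i ≠ j; (L2) e(H_i) = 0; and (L3) E(H_i) = d_i H_i, all hold on U. -/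
/-- Lamé coefficients of the generalized ε-system:
`H_i = ∏_{l ≠ i} |u^i - u^l| ^ (-ε_l)`. -/
noncomputable def Heps {n : ℕ} (ε : Fin n → ℝ) (i : Fin n) (x : Fin n → ℝ) : ℝ :=
  ∏ l ∈ Finset.univ.erase i, |x i - x l| ^ (-ε l)

/-- Rotation coefficients of the generalized ε-system:
`β_ij = (H_i/H_j) · ε_j/(u^i - u^j)`. -/
noncomputable def betaEps {n : ℕ} (ε : Fin n → ℝ) (i j : Fin n) (x : Fin n → ℝ) : ℝ :=
  (Heps ε i x / Heps ε j x) * (ε j / (x i - x j))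

/-!
With the logarithmic differential `dlog H_i = -∑_{l ≠ i} ε_l d(u^i - u^l) / (u^i - u^l)` one has
`dH_i = H_i · dlog H_i` and `dβ_ij = β_ij (dlog H_i - dlog H_j - d(u^i - u^j) / (u^i - u^j))`.
Each form `d(u^i - u^l) / (u^i - u^l)` vanishes on `e = (1, …, 1)` and equals `1` on the Euler
field `E = u`, and `e(f) = df(e)`, `E(f) = df(u)`: this gives (ED2), (ED3), (L2), (L3).
On `∂_k` with `k ≠ i` only the term `l = k` of `dlog H_i` survives, giving (L1) and (ED1).
-/

open Finset

lemma hasDerivAt_abs_rpow_of_ne_zero (p : ℝ) {t : ℝ} (ht : t ≠ 0) :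
    HasDerivAt (fun s : ℝ => |s| ^ p) (p * |t| ^ p / t) t := by
  convert (hasDerivAt_abs ht).rpow_const (p := p) (Or.inl (abs_ne_zero.2 ht)) using 1
  rw [Real.rpow_sub_one (abs_ne_zero.2 ht)]
  rcases ht.lt_or_gt with h | h <;> simp [h, abs_of_neg, abs_of_pos] <;> field_simp

section

variable {n : ℕ} (ε : Fin n → ℝ)

noncomputable def dlogHeps (i : Fin n) (x : Fin n → ℝ) : (Fin n → ℝ) →L[ℝ] ℝ :=
  ∑ l ∈ univ.erase i,
    (-ε l / (x i - x l)) •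
      ((ContinuousLinearMap.proj i : (Fin n → ℝ) →L[ℝ] ℝ) - ContinuousLinearMap.proj l)

lemma dlogHeps_apply (i : Fin n) (x v : Fin n → ℝ) :
    dlogHeps ε i x v = -∑ l ∈ univ.erase i, ε l * (v i - v l) / (x i - x l) := by
  simp only [dlogHeps, _root_.sum_apply, smul_apply, sub_apply, ContinuousLinearMap.proj_apply,
    smul_eq_mul, ← sum_neg_distrib]
  exact sum_congr rfl fun l _ => by ring

lemma dlogHeps_one (i : Fin n) (x : Fin n → ℝ) : dlogHeps ε i x 1 = 0 := by
  simp [dlogHeps_apply]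

lemma dlogHeps_self (i : Fin n) {x : Fin n → ℝ} (hx : ∀ l, l ≠ i → x i ≠ x l) :
    dlogHeps ε i x x = -∑ l ∈ univ.erase i, ε l := by
  rw [dlogHeps_apply]
  congr 1
  refine sum_congr rfl fun l hl => ?_
  have : x i - x l ≠ 0 := sub_ne_zero.2 (hx l (ne_of_mem_erase hl))
  field_simp

lemma dlogHeps_single {i k : Fin n} (hki : k ≠ i) (x : Fin n → ℝ) :
    dlogHeps ε i x (Pi.single k 1) = ε k / (x i - x k) := by
  rw [dlogHeps_apply, sum_eq_single_of_mem k (mem_erase.2 ⟨hki, mem_univ k⟩)]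
  · simp [hki.symm, neg_div]
  · intro l _ hlk
    simp [hki.symm, hlk]

lemma Heps_pos (i : Fin n) {x : Fin n → ℝ} (hx : ∀ l, l ≠ i → x i ≠ x l) :
    0 < Heps ε i x :=
  prod_pos fun l hl =>
    Real.rpow_pos_of_pos (abs_pos.2 (sub_ne_zero.2 (hx l (ne_of_mem_erase hl)))) _

lemma hasFDerivAt_Heps (i : Fin n) {x : Fin n → ℝ} (hx : ∀ l, l ≠ i → x i ≠ x l) :
    HasFDerivAt (Heps ε i) (Heps ε i x • dlogHeps ε i x) x := by
  have hfactor : ∀ l ∈ univ.erase i, HasFDerivAt (fun y : Fin n → ℝ => |y i - y l| ^ (-ε l))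
      ((-ε l * |x i - x l| ^ (-ε l) / (x i - x l)) •
        ((ContinuousLinearMap.proj i : (Fin n → ℝ) →L[ℝ] ℝ) - ContinuousLinearMap.proj l)) x := by
    intro l hl
    have hdiff : HasFDerivAt (fun y : Fin n → ℝ => y i - y l)
        ((ContinuousLinearMap.proj i : (Fin n → ℝ) →L[ℝ] ℝ) - ContinuousLinearMap.proj l) x :=
      (hasFDerivAt_apply i x).sub (hasFDerivAt_apply l x)
    exact (hasDerivAt_abs_rpow_of_ne_zero _
      (sub_ne_zero.2 (hx l (ne_of_mem_erase hl)))).comp_hasFDerivAt x hdiff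
  refine (HasFDerivAt.finsetProd hfactor).congr_fderiv ?_
  rw [dlogHeps, smul_sum]
  refine sum_congr rfl fun l hl => ?_
  rw [smul_smul, smul_smul, Heps, ← prod_erase_mul _ _ hl]
  congr 1
  ring

lemma hasFDerivAt_betaEps {i j : Fin n} (hij : i ≠ j) {x : Fin n → ℝ}
    (hx : Function.Injective x) :
    HasFDerivAt (betaEps ε i j) (betaEps ε i j x • (dlogHeps ε i x - dlogHeps ε j x -
      (x i - x j)⁻¹ • ((ContinuousLinearMap.proj i : (Fin n → ℝ) →L[ℝ] ℝ) -
        ContinuousLinearMap.proj j))) x := by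
  have hrow : ∀ a, ∀ l, l ≠ a → x a ≠ x l := fun a l hla => hx.ne hla.symm
  have hHj : Heps ε j x ≠ 0 := (Heps_pos ε j (hrow j)).ne'
  have hij' : x i - x j ≠ 0 := sub_ne_zero.2 (hx.ne hij)
  have hdiff : HasFDerivAt (fun y : Fin n → ℝ => y i - y j)
      ((ContinuousLinearMap.proj i : (Fin n → ℝ) →L[ℝ] ℝ) - ContinuousLinearMap.proj j) x :=
    (hasFDerivAt_apply i x).sub (hasFDerivAt_apply j x)
  have hprod : HasFDerivAt (fun y => Heps ε i y * (Heps ε j y)⁻¹ * (ε j * (y i - y j)⁻¹)) _ x :=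
    ((hasFDerivAt_Heps ε i (hrow i)).mul
    ((hasDerivAt_inv hHj).comp_hasFDerivAt x (hasFDerivAt_Heps ε j (hrow j)))).mul
    (((hasDerivAt_inv hij').comp_hasFDerivAt x hdiff).const_mul (ε j))
  have hβ : betaEps ε i j = fun y => Heps ε i y * (Heps ε j y)⁻¹ * (ε j * (y i - y j)⁻¹) := by
    funext y
    simp only [betaEps, div_eq_mul_inv]
  rw [hβ]
  refine hprod.congr_fderiv ?_
  ext v
  simp only [Pi.mul_apply, Function.comp_apply, neg_smul, smul_neg, smul_add, add_apply, neg_apply,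
    smul_apply, sub_apply, ContinuousLinearMap.proj_apply, smul_eq_mul]
  field_simp
  ring

lemma sum_pd_eq_fderiv_one (f : (Fin n → ℝ) → ℝ) (x : Fin n → ℝ) :
    ∑ l, pd l f x = fderiv ℝ f x 1 := by
  simp only [pd, ← map_sum]
  congr 1
  simpa using (univ_sum_single (1 : Fin n → ℝ))

lemma sum_mul_pd_eq_fderiv_self (f : (Fin n → ℝ) → ℝ) (x : Fin n → ℝ) :
    ∑ l, x l * pd l f x = fderiv ℝ f x x := by
  calc ∑ l, x l * pd l f x = fderiv ℝ f x (∑ l, Pi.single l (x l)) := by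
        rw [map_sum]
        refine sum_congr rfl fun l _ => ?_
        rw [pd, ← smul_eq_mul, ← map_smul, ← Pi.single_smul', smul_eq_mul, mul_one]
    _ = fderiv ℝ f x x := by rw [univ_sum_single]

lemma pd_Heps_eq_betaEps_mul {i j : Fin n} (hij : i ≠ j) {x : Fin n → ℝ}
    (hx : Function.Injective x) : pd j (Heps ε i) x = betaEps ε i j x * Heps ε j x := by
  have hHj : Heps ε j x ≠ 0 := (Heps_pos ε j fun l hl => hx.ne hl.symm).ne'
  rw [pd, (hasFDerivAt_Heps ε i fun l hl => hx.ne hl.symm).fderiv, smul_apply,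
    dlogHeps_single ε hij.symm, betaEps, smul_eq_mul]
  field_simp

lemma sum_pd_Heps (i : Fin n) {x : Fin n → ℝ} (hx : ∀ l, l ≠ i → x i ≠ x l) :
    ∑ l, pd l (Heps ε i) x = 0 := by
  rw [sum_pd_eq_fderiv_one, (hasFDerivAt_Heps ε i hx).fderiv, smul_apply, dlogHeps_one,
    smul_zero]

lemma sum_mul_pd_Heps (i : Fin n) {x : Fin n → ℝ} (hx : ∀ l, l ≠ i → x i ≠ x l) :
    ∑ l, x l * pd l (Heps ε i) x = (-∑ l ∈ univ.erase i, ε l) * Heps ε i x := by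
  rw [sum_mul_pd_eq_fderiv_self, (hasFDerivAt_Heps ε i hx).fderiv, smul_apply,
    dlogHeps_self ε i hx, smul_eq_mul, mul_comm]

lemma pd_betaEps_eq_mul_betaEps {i j k : Fin n} (hij : i ≠ j) (hjk : j ≠ k) (hik : i ≠ k)
    {x : Fin n → ℝ} (hx : Function.Injective x) :
    pd k (betaEps ε i j) x = betaEps ε i k x * betaEps ε k j x := by
  have hH : ∀ a, Heps ε a x ≠ 0 := fun a => (Heps_pos ε a fun l hl => hx.ne hl.symm).ne'
  have hsub : ∀ {a b}, a ≠ b → x a - x b ≠ 0 := fun h => sub_ne_zero.2 (hx.ne h)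
  rw [pd, (hasFDerivAt_betaEps ε hij hx).fderiv]
  simp only [betaEps, smul_apply, sub_apply, dlogHeps_single ε hik.symm,
    dlogHeps_single ε hjk.symm, ContinuousLinearMap.proj_apply, Pi.single_eq_of_ne hik,
    Pi.single_eq_of_ne hjk, smul_eq_mul]
  field_simp [hH i, hH j, hH k, hsub hij, hsub hik, hsub hjk, hsub hjk.symm]
  ring

lemma sum_pd_betaEps {i j : Fin n} (hij : i ≠ j) {x : Fin n → ℝ} (hx : Function.Injective x) :
    ∑ l, pd l (betaEps ε i j) x = 0 := by
  rw [sum_pd_eq_fderiv_one, (hasFDerivAt_betaEps ε hij hx).fderiv]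
  simp [dlogHeps_one]

lemma sum_mul_pd_betaEps {i j : Fin n} (hij : i ≠ j) {x : Fin n → ℝ}
    (hx : Function.Injective x) :
    ∑ l, x l * pd l (betaEps ε i j) x
      = ((-∑ l ∈ univ.erase i, ε l) - (-∑ l ∈ univ.erase j, ε l) - 1) * betaEps ε i j x := by
  rw [sum_mul_pd_eq_fderiv_self, (hasFDerivAt_betaEps ε hij hx).fderiv]
  simp only [smul_apply, sub_apply, dlogHeps_self ε i fun l hl => hx.ne hl.symm,
    dlogHeps_self ε j fun l hl => hx.ne hl.symm, ContinuousLinearMap.proj_apply, smul_eq_mul,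
    inv_mul_cancel₀ (sub_ne_zero.2 (hx.ne hij))]
  ring

end

theorem generalized_epsilon_system_solves_DE_general {n : ℕ} (ε : Fin n → ℝ)
    (U : Set (Fin n → ℝ))
    (hdist : ∀ x ∈ U, ∀ i j : Fin n, i ≠ j → x i ≠ x j) :
    -- (ED1)
    (∀ i j k : Fin n, i ≠ j → j ≠ k → i ≠ k → ∀ x ∈ U,
      pd k (betaEps ε i j) x = betaEps ε i k x * betaEps ε k j x) ∧
    -- (ED2)
    (∀ i j : Fin n, i ≠ j → ∀ x ∈ U, ∑ l, pd l (betaEps ε i j) x = 0) ∧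
    -- (ED3) with d_i = -∑_{l ≠ i} ε_l
    (∀ i j : Fin n, i ≠ j → ∀ x ∈ U,
      ∑ l, x l * pd l (betaEps ε i j) x
        = ((-∑ l ∈ Finset.univ.erase i, ε l) - (-∑ l ∈ Finset.univ.erase j, ε l) - 1)
            * betaEps ε i j x) ∧
    -- (L1)
    (∀ i j : Fin n, i ≠ j → ∀ x ∈ U,
      pd j (Heps ε i) x = betaEps ε i j x * Heps ε j x) ∧
    -- (L2)
    (∀ i : Fin n, ∀ x ∈ U, ∑ l, pd l (Heps ε i) x = 0) ∧
    -- (L3)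
    (∀ i : Fin n, ∀ x ∈ U,
      ∑ l, x l * pd l (Heps ε i) x
        = (-∑ l ∈ Finset.univ.erase i, ε l) * Heps ε i x) := by
  have hinj : ∀ x ∈ U, Function.Injective x := fun x hx a b hab =>
    by_contra fun hne => hdist x hx a b hne hab
  refine ⟨fun i j k hij hjk hik x hx => pd_betaEps_eq_mul_betaEps ε hij hjk hik (hinj x hx),
    fun i j hij x hx => sum_pd_betaEps ε hij (hinj x hx),
    fun i j hij x hx => sum_mul_pd_betaEps ε hij (hinj x hx),
    fun i j hij x hx => pd_Heps_eq_betaEps_mul ε hij (hinj x hx),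
    fun i x hx => sum_pd_Heps ε i fun l hl => (hinj x hx).ne hl.symm,
    fun i x hx => sum_mul_pd_Heps ε i fun l hl => (hinj x hx).ne hl.symm⟩

theorem generalized_epsilon_system_solves_DE {n : ℕ} (hn : 2 ≤ n) (ε : Fin n → ℝ)
    (U : Set (Fin n → ℝ)) (hU : IsOpen U)
    (hdist : ∀ x ∈ U, ∀ i j : Fin n, i ≠ j → x i ≠ x j) :
    -- (ED1)
    (∀ i j k : Fin n, i ≠ j → j ≠ k → i ≠ k → ∀ x ∈ U,
      pd k (betaEps ε i j) x = betaEps ε i k x * betaEps ε k j x) ∧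
    -- (ED2)
    (∀ i j : Fin n, i ≠ j → ∀ x ∈ U, ∑ l, pd l (betaEps ε i j) x = 0) ∧
    -- (ED3) with d_i = -∑_{l ≠ i} ε_l
    (∀ i j : Fin n, i ≠ j → ∀ x ∈ U,
      ∑ l, x l * pd l (betaEps ε i j) x
        = ((-∑ l ∈ Finset.univ.erase i, ε l) - (-∑ l ∈ Finset.univ.erase j, ε l) - 1)
            * betaEps ε i j x) ∧
    -- (L1)
    (∀ i j : Fin n, i ≠ j → ∀ x ∈ U,
      pd j (Heps ε i) x = betaEps ε i j x * Heps ε j x) ∧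
    -- (L2)
    (∀ i : Fin n, ∀ x ∈ U, ∑ l, pd l (Heps ε i) x = 0) ∧
    -- (L3)
    (∀ i : Fin n, ∀ x ∈ U,
      ∑ l, x l * pd l (Heps ε i) x
        = (-∑ l ∈ Finset.univ.erase i, ε l) * Heps ε i x) :=
  generalized_epsilon_system_solves_DE_general ε U hdist
end

section
/- Let n ≥ 2, ε₁,…,ε_n ∈ ℝ, m ∈ ℝ with m ≠ −1, and let K be a smooth function on an open set U ⊆ ℝⁿ all of whose points have pairwise distinct coordinates, satisfying (u^i − u^j) ∂_j ∂_i K + (ε_j ∂_i K − ε_i ∂_j K) = 0 for all i ≠ j, together with the homogeneity condition E(K) = m K. Define K' := (1/(m+1)) [ Σ_{l=1}^n (u^l)² ∂_l K − (Σ_{l=1}^n ε_l u^l) K ]. Then ∂_i K' = u^i ∂_i K − ε_i K for every i = 1,…,n. -/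
theorem recursion_algebraically_solved {n : ℕ} (hn : 2 ≤ n) (ε : Fin n → ℝ)
    (m : ℝ) (hm : m ≠ -1)
    (U : Set (Fin n → ℝ)) (hU : IsOpen U)
    (hdist : ∀ x ∈ U, ∀ i j : Fin n, i ≠ j → x i ≠ x j)
    (K : (Fin n → ℝ) → ℝ) (hK : ContDiffOn ℝ (⊤ : ℕ∞) K U)
    (hPDE : ∀ i j : Fin n, i ≠ j → ∀ x ∈ U,
      (x i - x j) * pd j (fun y => pd i K y) x
        + (ε j * pd i K x - ε i * pd j K x) = 0)
    (hhom : ∀ x ∈ U, ∑ l, x l * pd l K x = m * K x)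
    (K' : (Fin n → ℝ) → ℝ)
    (hK' : ∀ x, K' x = (1 / (m + 1))
        * ((∑ l, (x l) ^ 2 * pd l K x) - (∑ l, ε l * x l) * K x)) :
    ∀ i : Fin n, ∀ x ∈ U, pd i K' x = x i * pd i K x - ε i * K x := by
  intro i x hx
  have hm1 : m + 1 ≠ 0 := by intro h; apply hm; linarith
  -- differentiability facts
  have hDK : ∀ y ∈ U, DifferentiableAt ℝ K y := fun y hy =>
    (hK.contDiffAt (hU.mem_nhds hy)).differentiableAt (by simp)
  have hDpd : ∀ l : Fin n, ∀ y ∈ U, DifferentiableAt ℝ (pd l K) y := by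
    intro l y hy
    have h2 : ContDiffAt ℝ (⊤ : ℕ∞) (fderiv ℝ K) y :=
      (hK.contDiffAt (hU.mem_nhds hy)).fderiv_right le_rfl
    exact ((ContinuousLinearMap.apply ℝ ℝ (Pi.single l 1)).differentiableAt).comp y
      (h2.differentiableAt (by simp))
  set v : Fin n → ℝ := Pi.single i 1 with hv
  set A : Fin n → ℝ := fun l => pd i (fun y => pd l K y) x with hA
  set B : Fin n → ℝ := fun l => pd l K x with hB
  have hAl : ∀ l : Fin n, fderiv ℝ (pd l K) x v = A l := fun l => rfl
  have hBi : fderiv ℝ K x v = B i := rfl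
  -- evaluation of Pi.single sums
  have hsingle : ∀ (c : Fin n → ℝ), ∑ l, c l * v l = c i := by
    intro c
    simp [hv, Pi.single_apply, mul_ite]
  -- differentiated homogeneity
  have hE : ∑ l, x l * A l = (m - 1) * B i := by
    have hF : HasFDerivAt (fun y => ∑ l, y l * pd l K y)
        (∑ l, (x l • fderiv ℝ (pd l K) x + pd l K x • (ContinuousLinearMap.proj l))) x := by
      apply HasFDerivAt.fun_sum
      intro l _
      exact (ContinuousLinearMap.proj l : (Fin n → ℝ) →L[ℝ] ℝ).hasFDerivAt.mul
        ((hDpd l x hx).hasFDerivAt)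
    have hG : HasFDerivAt (fun y => m * K y) (m • fderiv ℝ K x) x :=
      HasFDerivAt.const_mul (𝕜 := ℝ) (hDK x hx).hasFDerivAt m
    have heq : (fun y => ∑ l, y l * pd l K y) =ᶠ[nhds x] (fun y => m * K y) :=
      Filter.eventuallyEq_of_mem (hU.mem_nhds hx) hhom
    have := Filter.EventuallyEq.fderiv_eq (𝕜 := ℝ) heq
    rw [hF.fderiv, hG.fderiv] at this
    have happ := congrArg (fun (L : (Fin n → ℝ) →L[ℝ] ℝ) => L v) this
    simp only [ContinuousLinearMap.sum_apply, ContinuousLinearMap.add_apply,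
      ContinuousLinearMap.smul_apply, ContinuousLinearMap.proj_apply, smul_eq_mul] at happ
    rw [Finset.sum_add_distrib] at happ
    simp only [hAl, hBi] at happ
    have h2 : ∑ l, pd l K x * v l = B i := hsingle _
    rw [h2] at happ
    linarith [happ]
  -- homogeneity at x
  have hH : ∑ l, x l * B l = m * K x := hhom x hx
  -- PDE relations
  have hP : ∀ l : Fin n, x l * ((x l - x i) * A l) = x l * (ε l * B i - ε i * B l) := by
    intro l
    by_cases h : l = i
    · subst h; ring
    · have := hPDE l i h x hx
      have h2 : (x l - x i) * A l = ε l * B i - ε i * B l := by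
        simp only [hA, hB]; linarith [this]
      rw [h2]
  -- key sum identity
  have hkey : ∑ l, (x l) ^ 2 * A l
      = x i * ((m - 1) * B i) + ((∑ l, ε l * x l) * B i - ε i * (m * K x)) := by
    have h1 : ∀ l : Fin n, (x l) ^ 2 * A l
        = x i * (x l * A l) + x l * ((x l - x i) * A l) := fun l => by ring
    calc ∑ l, (x l) ^ 2 * A l
        = ∑ l, (x i * (x l * A l) + x l * (ε l * B i - ε i * B l)) := by
          refine Finset.sum_congr rfl fun l _ => ?_
          rw [h1 l, hP l]
      _ = x i * (∑ l, x l * A l) + ((∑ l, ε l * x l) * B i - ε i * (∑ l, x l * B l)) := by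
          rw [Finset.sum_add_distrib, Finset.mul_sum, Finset.sum_mul, Finset.mul_sum]
          rw [← Finset.sum_sub_distrib]
          congr 1
          refine Finset.sum_congr rfl fun l _ => ?_
          ring
      _ = x i * ((m - 1) * B i) + ((∑ l, ε l * x l) * B i - ε i * (m * K x)) := by
          rw [hE, hH]
  -- compute the derivative of K'
  have hK'' : K' = fun y => (1 / (m + 1))
      * ((∑ l, (y l) * (y l) * pd l K y) - (∑ l, ε l * y l) * K y) := by
    funext y; rw [hK' y]; simp only [pow_two]
  have h1 : HasFDerivAt (fun y => ∑ l, (y l) * (y l) * pd l K y)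
      (∑ l, ((x l * x l) • fderiv ℝ (pd l K) x
        + pd l K x • (x l • (ContinuousLinearMap.proj l)
          + x l • (ContinuousLinearMap.proj l)))) x := by
    apply HasFDerivAt.fun_sum
    intro l _
    exact ((ContinuousLinearMap.proj l : (Fin n → ℝ) →L[ℝ] ℝ).hasFDerivAt.mul
      (ContinuousLinearMap.proj l : (Fin n → ℝ) →L[ℝ] ℝ).hasFDerivAt).mul
      ((hDpd l x hx).hasFDerivAt)
  have h2 : HasFDerivAt (fun y => (∑ l, ε l * y l) * K y)
      ((∑ l, ε l * x l) • fderiv ℝ K x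
        + K x • (∑ l, ε l • (ContinuousLinearMap.proj l))) x := by
    apply HasFDerivAt.mul
    · exact HasFDerivAt.fun_sum fun l _ =>
        HasFDerivAt.const_mul (𝕜 := ℝ) (ContinuousLinearMap.proj l : (Fin n → ℝ) →L[ℝ] ℝ).hasFDerivAt (ε l)
    · exact (hDK x hx).hasFDerivAt
  have h3 : HasFDerivAt K'
      ((1 / (m + 1)) • ((∑ l, ((x l * x l) • fderiv ℝ (pd l K) x
        + pd l K x • (x l • (ContinuousLinearMap.proj l)
          + x l • (ContinuousLinearMap.proj l))))
        - ((∑ l, ε l * x l) • fderiv ℝ K x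
          + K x • (∑ l, ε l • (ContinuousLinearMap.proj l))))) x := by
    rw [hK'']
    exact HasFDerivAt.const_mul (𝕜 := ℝ) (h1.sub h2) (1 / (m + 1))
  have h4 : pd i K' x
      = (1 / (m + 1)) * ((∑ l, (x l * x l * A l + pd l K x * (x l * v l + x l * v l)))
          - ((∑ l, ε l * x l) * B i + K x * (∑ l, ε l * v l))) := by
    show fderiv ℝ K' x v = _
    rw [h3.fderiv]
    simp only [ContinuousLinearMap.smul_apply, ContinuousLinearMap.sub_apply,
      ContinuousLinearMap.sum_apply, ContinuousLinearMap.add_apply,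
      ContinuousLinearMap.proj_apply, smul_eq_mul, hAl, hBi]
  have h5 : ∑ l, (x l * x l * A l + pd l K x * (x l * v l + x l * v l))
      = (∑ l, (x l)^2 * A l) + 2 * x i * B i := by
    rw [Finset.sum_add_distrib]
    congr 1
    · exact Finset.sum_congr rfl fun l _ => by ring
    · have : ∀ l : Fin n, pd l K x * (x l * v l + x l * v l)
          = (2 * x l * pd l K x) * v l := fun l => by ring
      rw [Finset.sum_congr rfl fun l _ => this l, hsingle]
  have h6 : ∑ l, ε l * v l = ε i := by
    have := hsingle ε
    simpa using this
  rw [h4, h5, h6, hkey]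
  have hBi' : B i = pd i K x := rfl
  rw [hBi'] at *
  field_simp
  ring
end
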